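/- arXiv:1907.13032 — 9 statements merged into one kernel-verified Lean document; each statement's English description precedes it below -/
import Mathlib

section
/- Let q = 3^m with m ≥ 4, Tr : GF(q) → GF(3) the trace, a ∈ GF(q)*, h ∈ GF(3), and H(a,h) = {x ∈ GF(q) : Tr(a x^2) + h = 0}. Then the difference set Δ(H(a,h)) = {s - s' : s, s' ∈ H(a,h)} equals all of GF(q). -/
/-!
Put `Q x = Tr (a x²)` and `B x y = Tr (a x y)`, a nondegenerate symmetric bilinear form on the
`m`-dimensional `𝔽₃`-space `GF(q)`. Given `c`, it suffices to find `y ⊥ c` with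
`Q y = -h - Q c`: then `s = y - c` and `s' = y + c` lie in `H(a,h)` and `s - s' = -2c = c`.
Such a `y` exists because `c^⊥` contains orthogonal anisotropic vectors `u, v`, and
`σ² Q u + τ² Q v` takes every value of `𝔽₃`. The vectors `u, v` exist because a subspace `S^⊥`
on which `Q` vanishes is totally isotropic, hence `S^⊥ ≤ S^⊥⊥ = S`; for `S = span {c, u}`
(with `u ∉ S^⊥`) this forces `m - 2 ≤ dim S^⊥ < dim S ≤ 2`, which is where `m ≥ 4` enters.
-/

open Module

theorem ZMod.exists_sq_mul_add_sq_mul_eq (p q k : ZMod 3) (hp : p ≠ 0) (hq : q ≠ 0) :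
    ∃ s t : ZMod 3, s ^ 2 * p + t ^ 2 * q = k := by
  revert p q k; decide

namespace LinearMap.BilinForm

section

variable {K V : Type*} [Field K] [AddCommGroup V] [Module K V] [FiniteDimensional K V]
  {B : LinearMap.BilinForm K V}

theorem orthogonal_le_of_forall_self_eq_zero [Invertible (2 : K)] (hB : B.Nondegenerate)
    (hBs : LinearMap.IsSymm B) {S : Submodule K V} (hS : ∀ w ∈ B.orthogonal S, B w w = 0) :
    B.orthogonal S ≤ S := by
  have hzero : B.restrict (B.orthogonal S) = 0 := by
    by_contra hne
    obtain ⟨⟨w, hw⟩, hww⟩ := exists_bilinForm_self_ne_zero hne (hBs.domRestrict _)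
    exact hww (hS w hw)
  intro w hw
  rw [← orthogonal_orthogonal hB hBs.isRefl S]
  intro v hv
  exact congr($hzero ⟨v, hv⟩ ⟨w, hw⟩)

theorem exists_mem_orthogonal_self_ne_zero [Invertible (2 : K)] (hB : B.Nondegenerate)
    (hBs : LinearMap.IsSymm B) {S : Submodule K V} (hS : 2 * finrank K S < finrank K V) :
    ∃ w ∈ B.orthogonal S, B w w ≠ 0 := by
  by_contra! hiso
  have := Submodule.finrank_mono (orthogonal_le_of_forall_self_eq_zero hB hBs hiso)
  rw [finrank_orthogonal hB] at this
  omega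

theorem exists_mem_orthogonal_self_ne_zero_of_mem [Invertible (2 : K)] (hB : B.Nondegenerate)
    (hBs : LinearMap.IsSymm B) {S : Submodule K V} (hS : 2 * finrank K S ≤ finrank K V) {s : V}
    (hs : s ∈ S) (hss : B s s ≠ 0) :
    ∃ w ∈ B.orthogonal S, B w w ≠ 0 := by
  by_contra! hiso
  have hlt : B.orthogonal S < S :=
    lt_of_le_of_ne (orthogonal_le_of_forall_self_eq_zero hB hBs hiso)
      fun heq => hss (hiso s (heq.symm ▸ hs))
  have := Submodule.finrank_lt_finrank_of_lt hlt
  rw [finrank_orthogonal hB] at this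
  omega

end

section ZMod3

variable {V : Type*} [AddCommGroup V] [Module (ZMod 3) V] [FiniteDimensional (ZMod 3) V]
  {B : LinearMap.BilinForm (ZMod 3) V}

theorem exists_apply_eq_zero_and_apply_self_eq (hB : B.Nondegenerate) (hBs : LinearMap.IsSymm B)
    (hV : 4 ≤ finrank (ZMod 3) V) (z : V) (k : ZMod 3) :
    ∃ y, B z y = 0 ∧ B y y = k := by
  have : Invertible (2 : ZMod 3) := invertibleOfNonzero (by decide)
  have hz : finrank (ZMod 3) (Submodule.span (ZMod 3) {z}) ≤ 1 := by
    simpa using finrank_span_le_card ({z} : Set V)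
  obtain ⟨u, hu, huu⟩ := exists_mem_orthogonal_self_ne_zero hB hBs
    (S := Submodule.span (ZMod 3) {z}) (by omega)
  have hzu : finrank (ZMod 3) (Submodule.span (ZMod 3) {z, u}) ≤ 2 := by
    classical
    exact (finrank_span_le_card ({z, u} : Set V)).trans (by simpa using Finset.card_le_two)
  obtain ⟨v, hv, hvv⟩ := exists_mem_orthogonal_self_ne_zero_of_mem hB hBs (by omega)
    (Submodule.subset_span (by simp) : u ∈ Submodule.span (ZMod 3) {z, u}) huu
  rw [mem_orthogonal_iff] at hu hv
  have hzu : B z u = 0 := hu z (Submodule.mem_span_singleton_self z)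
  have hzv : B z v = 0 := hv z (Submodule.subset_span (by simp))
  have huv : B u v = 0 := hv u (Submodule.subset_span (by simp))
  obtain ⟨s, t, hst⟩ := ZMod.exists_sq_mul_add_sq_mul_eq _ _ k huu hvv
  refine ⟨s • u + t • v, ?_, ?_⟩
  · simp [hzu, hzv]
  · simp only [map_add, map_smul, LinearMap.add_apply, smul_apply, smul_eq_mul, huv, mul_zero,
      add_zero, hBs.eq_iff.mp huv, zero_add, ← hst]
    ring

end ZMod3

end LinearMap.BilinForm

namespace Algebra

variable (K : Type*) {L : Type*} [Field K] [Field L] [Algebra K L]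

noncomputable def twistedTraceForm (a : L) : LinearMap.BilinForm K L :=
  (traceForm K L).compLeft (LinearMap.mulLeft K a)

variable {K}

theorem twistedTraceForm_apply (a x y : L) :
    twistedTraceForm K a x y = trace K L (a * x * y) := rfl

theorem twistedTraceForm_isSymm (a : L) : LinearMap.IsSymm (twistedTraceForm K a) :=
  ⟨fun x y => by simp only [twistedTraceForm_apply, RingHom.id_apply, mul_right_comm]⟩

theorem twistedTraceForm_nondegenerate [FiniteDimensional K L] [Algebra.IsSeparable K L]
    {a : L} (ha : a ≠ 0) : (twistedTraceForm K a).Nondegenerate := by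
  refine .ofSeparatingLeft fun x hx => ?_
  have hax : a * x = 0 := (traceForm_nondegenerate K L).1 (a * x) hx
  exact (mul_eq_zero.mp hax).resolve_left ha

end Algebra

open Algebra in
/-- the set of differences of elements of
`H(a,h) = {x : Tr(a x^2) + h = 0}` is all of `GF(q)`, `q = 3^m`, `m ≥ 4`. -/
theorem delta_H_eq_univ (m : ℕ) (hm : 4 ≤ m)
    (F : Type) [Field F] [Fintype F] [Algebra (ZMod 3) F]
    (hF : Fintype.card F = 3 ^ m)
    (a : F) (ha : a ≠ 0) (h : ZMod 3) :
    {c : F | ∃ s s' : F,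
        Algebra.trace (ZMod 3) F (a * s ^ 2) + h = 0 ∧
        Algebra.trace (ZMod 3) F (a * s' ^ 2) + h = 0 ∧
        c = s - s'} = Set.univ := by
  have hdim : finrank (ZMod 3) F = m := by
    have := card_eq_pow_finrank (K := ZMod 3) (V := F)
    rw [ZMod.card, hF] at this
    exact Nat.pow_right_injective (by norm_num) this.symm
  have hthree : (3 : F) = 0 := by
    have := charP_of_injective_algebraMap (algebraMap (ZMod 3) F).injective 3
    exact CharP.ofNat_eq_zero F 3
  have hquad (x : F) : trace (ZMod 3) F (a * x ^ 2) = twistedTraceForm (ZMod 3) a x x := by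
    rw [twistedTraceForm_apply, sq, mul_assoc]
  refine Set.eq_univ_of_forall fun c => ?_
  obtain ⟨y, hcy, hy⟩ := LinearMap.BilinForm.exists_apply_eq_zero_and_apply_self_eq
    (twistedTraceForm_nondegenerate ha) (twistedTraceForm_isSymm a) (hdim ▸ hm) c
    (-h - twistedTraceForm (ZMod 3) a c c)
  have hyc := (twistedTraceForm_isSymm a).eq_iff.mp hcy
  refine ⟨y - c, y + c, ?_, ?_, ?_⟩
  · simp [hquad, hcy, hyc, hy]
  · simp [hquad, hcy, hyc, hy]
  · linear_combination c * hthree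
end

section
/- Let q = 3^m with m ≥ 4, Tr : GF(q) → GF(3) the trace, a ∈ GF(q)*, b ∈ GF(q)*, h ∈ GF(3). Let N(a,b,h) be the number of x ∈ GF(q) satisfying both Tr(a x^2) + h = 0 and Tr(a(x+b)^2) + h = 0. Then N(a,b,h) ≥ 3^{m-2} - 2·3^{(m-2)/2}. -/
/-!
Expanding the indicators of the two trace conditions with additive characters of `ZMod p`
writes `p² N` as a double sum over `(s, t) ∈ (ZMod p)²` of twisted quadratic exponential sums
`∑ₓ ψ(s α x² + t β x)`, where `ψ = e ∘ Tr`. The terms with `s = 0` contribute exactly `q`; every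
other term has absolute value `√q` (the Weil bound, which for quadratics is the exact evaluation
`|∑ₓ ψ(αx² + βx)|² = q`), so `|p² N - q| ≤ p (p - 1) √q`.
For `p = 3` the condition `Tr(a (x + b)²) + h = 0` becomes, given the first one, the linear
condition `Tr(2ab x) + Tr(a b²) = 0`.
-/

open Finset AddChar
open ZMod (stdAddChar isPrimitive_stdAddChar)

namespace AddChar

variable {F : Type*} [Field F] [Fintype F]

theorem norm_sq_sum_quadratic (hF : ringChar F ≠ 2) {ψ : AddChar F ℂ} (hψ : ψ.IsPrimitive)
    {α : F} (hα : α ≠ 0) (β : F) :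
    ‖∑ x, ψ (α * x ^ 2 + β * x)‖ ^ 2 = Fintype.card F := by
  classical
  set f : F → F := fun x => α * x ^ 2 + β * x
  -- Substituting `x = y + d` makes the phase linear in `y`, so orthogonality leaves only `d = 0`.
  have hshift (y d : F) : f (y + d) - f y = f d + y * (2 * α * d) := by simp only [f]; ring
  have h2α (d : F) : 2 * α * d = 0 ↔ d = 0 := by simp [Ring.two_ne_zero hF, hα]
  suffices h : ((‖∑ x, ψ (f x)‖ ^ 2 : ℝ) : ℂ) = Fintype.card F by exact_mod_cast h
  calc ((‖∑ x, ψ (f x)‖ ^ 2 : ℝ) : ℂ)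
      = ∑ y, ∑ d, ψ (f (y + d) - f y) := by
        rw [Complex.ofReal_pow, ← Complex.mul_conj', map_sum, sum_mul_sum, sum_comm]
        refine sum_congr rfl fun y _ => ?_
        rw [← Equiv.sum_comp (Equiv.addLeft y)]
        simp [← map_neg_eq_conj, ← map_add_eq_mul, sub_eq_add_neg]
    _ = ∑ d, ψ (f d) * ∑ y, ψ (y * (2 * α * d)) := by
        rw [sum_comm]; simp_rw [hshift, map_add_eq_mul, mul_sum]
    _ = Fintype.card F := by simp [sum_mulShift _ hψ, h2α, f]

theorem norm_sum_quadratic (hF : ringChar F ≠ 2) {ψ : AddChar F ℂ} (hψ : ψ.IsPrimitive)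
    {α : F} (hα : α ≠ 0) (β : F) :
    ‖∑ x, ψ (α * x ^ 2 + β * x)‖ = √(Fintype.card F) := by
  rw [← norm_sq_sum_quadratic hF hψ hα β, Real.sqrt_sq (norm_nonneg _)]

end AddChar

theorem ZMod.natCast_card_filter_and_eq_sum_stdAddChar {N : ℕ} [NeZero N] {X : Type*}
    [Fintype X] [DecidableEq (ZMod N)] (g₁ g₂ : X → ZMod N) :
    ((N ^ 2 * #{x | g₁ x = 0 ∧ g₂ x = 0} : ℕ) : ℂ) =
      ∑ s, ∑ t, ∑ x, stdAddChar (s * g₁ x) * stdAddChar (t * g₂ x) := by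
  have hsum (u : ZMod N) : ∑ s, stdAddChar (s * u) = if u = 0 then (N : ℂ) else 0 := by
    rw [sum_mulShift _ (isPrimitive_stdAddChar N), ZMod.card]
    split_ifs <;> simp
  simp_rw [← sum_comm (γ := X), ← sum_mul_sum, hsum, card_filter, mul_sum]
  push_cast
  refine sum_congr rfl fun x _ => ?_
  split_ifs <;> simp_all [sq]

section TraceAddChar

variable (p : ℕ) [NeZero p] (F : Type*) [Field F] [Algebra (ZMod p) F]

noncomputable def traceAddChar : AddChar F ℂ :=
  stdAddChar.compAddMonoidHom (Algebra.trace (ZMod p) F).toAddMonoidHom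

lemma isPrimitive_traceAddChar [Fact p.Prime] [Finite F] : (traceAddChar p F).IsPrimitive := by
  refine IsPrimitive.of_ne_one (ne_one_iff.2 ?_)
  obtain ⟨x, hx⟩ : ∃ x, Algebra.trace (ZMod p) F x ≠ 0 := by
    by_contra! h
    exact one_ne_zero ((traceForm_nondegenerate (ZMod p) F).1 1 (by simpa using h))
  refine ⟨x, fun h => hx ?_⟩
  simpa [traceAddChar, (isPrimitive_stdAddChar p).zmod_char_eq_one_iff] using h

variable {p F}

lemma traceAddChar_smul (s : ZMod p) (x : F) :
    traceAddChar p F (s • x) = stdAddChar (s * Algebra.trace (ZMod p) F x) := by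
  simp [traceAddChar]

omit [NeZero p] in
lemma ringChar_eq_of_algebra_zmod [Fact p.Prime] : ringChar F = p :=
  have := charP_of_injective_algebraMap (algebraMap (ZMod p) F).injective p
  ringChar.eq F p

variable [Fintype F]

lemma sum_stdAddChar_trace_quadratic_linear (α β : F) (u v s t : ZMod p) :
    ∑ x : F, stdAddChar (s * (Algebra.trace (ZMod p) F (α * x ^ 2) + u)) *
        stdAddChar (t * (Algebra.trace (ZMod p) F (β * x) + v)) =
      stdAddChar (s * u + t * v) * ∑ x, traceAddChar p F ((s • α) * x ^ 2 + (t • β) * x) := by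
  simp only [mul_sum, smul_mul_assoc, map_add_eq_mul, traceAddChar_smul, mul_add]
  exact sum_congr rfl fun x _ => by ring

end TraceAddChar

section TraceCount

variable {p : ℕ} [Fact p.Prime] {F : Type*} [Field F] [Fintype F] [Algebra (ZMod p) F]
  [DecidableEq (ZMod p)]

theorem abs_card_filter_trace_quadratic_linear_sub_le (hp : p ≠ 2) {α β : F} (hα : α ≠ 0)
    (hβ : β ≠ 0) (u v : ZMod p) :
    |(p ^ 2 * #{x | Algebra.trace (ZMod p) F (α * x ^ 2) + u = 0 ∧
        Algebra.trace (ZMod p) F (β * x) + v = 0} : ℝ) - Fintype.card F| ≤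
      p * (p - 1) * √(Fintype.card F) := by
  classical
  set N := #{x | Algebra.trace (ZMod p) F (α * x ^ 2) + u = 0 ∧
    Algebra.trace (ZMod p) F (β * x) + v = 0}
  set W : ZMod p → ZMod p → ℂ := fun s t =>
    stdAddChar (s * u + t * v) * ∑ x, traceAddChar p F ((s • α) * x ^ 2 + (t • β) * x)
  have hcount : ((p ^ 2 * N : ℕ) : ℂ) = ∑ s, ∑ t, W s t := by
    simp only [N, W, ZMod.natCast_card_filter_and_eq_sum_stdAddChar, sum_stdAddChar_trace_quadratic_linear]
  have hS₀ (t : ZMod p) : ∑ x, traceAddChar p F ((0 : ZMod p) • α * x ^ 2 + (t • β) * x) =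
      ((if t • β = 0 then Fintype.card F else 0 : ℕ) : ℂ) := by
    simp only [zero_smul, zero_mul, zero_add, mul_comm (t • β)]
    exact sum_mulShift _ (isPrimitive_traceAddChar p F)
  have hW₀ : ∑ t, W 0 t = Fintype.card F := by
    simp only [W, hS₀, smul_eq_zero, hβ]
    simp
  have hW (s t : ZMod p) (hs : s ≠ 0) : ‖W s t‖ = √(Fintype.card F) := by
    simp only [W, norm_mul, AddChar.norm_apply, one_mul]
    exact norm_sum_quadratic (by rwa [ringChar_eq_of_algebra_zmod (p := p)])
      (isPrimitive_traceAddChar p F) (smul_ne_zero hs hα) _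
  have hsplit : ((p ^ 2 * N : ℕ) : ℂ) - Fintype.card F =
      ∑ s ∈ (univ : Finset (ZMod p)).erase 0, ∑ t, W s t := by
    rw [hcount, ← add_sum_erase _ _ (mem_univ 0), hW₀, add_sub_cancel_left]
  calc |(p ^ 2 * N : ℝ) - Fintype.card F|
      = ‖((p ^ 2 * N : ℕ) : ℂ) - Fintype.card F‖ := by
        rw [← Real.norm_eq_abs, ← Complex.norm_real]; push_cast; rfl
    _ ≤ ∑ s ∈ (univ : Finset (ZMod p)).erase 0, ∑ t : ZMod p, √(Fintype.card F) := by
        rw [hsplit]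
        exact norm_sum_le_of_le _ fun s hs =>
          norm_sum_le_of_le _ fun t _ => (hW s t (ne_of_mem_erase hs)).le
    _ = p * (p - 1) * √(Fintype.card F) := by
        rw [sum_const, sum_const, card_erase_of_mem (mem_univ _), card_univ, ZMod.card,
          nsmul_eq_mul, nsmul_eq_mul, Nat.cast_pred (Fact.out : p.Prime).pos]
        ring

end TraceCount

/-- the number `N(a,b,h)` of `x` with `Tr(a x^2) + h = 0` and
`Tr(a (x+b)^2) + h = 0` is at least `3^(m-2) - 2 · 3^((m-2)/2)`. -/
theorem N_lower_bound (m : ℕ) (hm : 4 ≤ m)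
    (F : Type) [Field F] [Fintype F] [Algebra (ZMod 3) F] [DecidableEq (ZMod 3)]
    (hF : Fintype.card F = 3 ^ m)
    (a b : F) (ha : a ≠ 0) (hb : b ≠ 0) (h : ZMod 3) :
    ((Finset.univ.filter fun x : F =>
        Algebra.trace (ZMod 3) F (a * x ^ 2) + h = 0 ∧
        Algebra.trace (ZMod 3) F (a * (x + b) ^ 2) + h = 0).card : ℝ) ≥
      (3 : ℝ) ^ (m - 2) - 2 * Real.sqrt ((3 : ℝ) ^ (m - 2)) := by
  set Tr := Algebra.trace (ZMod 3) F
  have h2 : (2 : F) ≠ 0 := Ring.two_ne_zero (by rw [ringChar_eq_of_algebra_zmod (p := 3)]; decide)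
  have hfilter : (univ.filter fun x : F => Tr (a * x ^ 2) + h = 0 ∧ Tr (a * (x + b) ^ 2) + h = 0) =
      univ.filter fun x : F => Tr (a * x ^ 2) + h = 0 ∧ Tr (2 * a * b * x) + Tr (a * b ^ 2) = 0 := by
    refine filter_congr fun x _ => and_congr_right fun h₁ => ?_
    rw [show a * (x + b) ^ 2 = a * x ^ 2 + (2 * a * b * x + a * b ^ 2) by ring, map_add, map_add,
      add_right_comm, h₁, zero_add]
  have hq : (Fintype.card F : ℝ) = 3 ^ 2 * 3 ^ (m - 2) := by
    rw [hF, ← pow_add, Nat.add_sub_cancel' (by omega : 2 ≤ m), Nat.cast_pow, Nat.cast_ofNat]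
  have key := abs_card_filter_trace_quadratic_linear_sub_le (by decide : 3 ≠ 2) ha
    (mul_ne_zero (mul_ne_zero h2 ha) hb) h (Tr (a * b ^ 2))
  rw [hq, Real.sqrt_mul (by positivity), Real.sqrt_sq (by positivity)] at key
  rw [hfilter]
  push_cast at key
  linarith [(abs_le.1 key).1]
end

section
/- Let q = 3^m with m ≥ 3 odd. Let N(q) be the set of nonsquares in GF(q). Then Δ(N(q)) = {s - s' : s, s' ∈ N(q)} = GF(q). -/
/-!
Since `q ≡ 3 (mod 4)`, `-1` is a nonsquare, so the nonsquares are exactly the elements `-a²` with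
`a ≠ 0`, and `(-a²) - (-b²) = b² - a²`. It remains to write every `c` as a difference of two nonzero
squares: with `b - a = t` and `b + a = c / t`, both `a` and `b` are nonzero as soon as `t ≠ 0` and
`t² ≠ ±c`, and such a `t` exists once the field has more than `5` elements.
-/

open Polynomial

section Field

variable {F : Type*} [Field F]

theorem exists_ne_zero_and_sq_ne_and_sq_ne_neg [Fintype F] (hF : 5 < Fintype.card F) (c : F) :
    ∃ t : F, t ≠ 0 ∧ t ^ 2 ≠ c ∧ t ^ 2 ≠ -c := by
  by_contra! h
  set p : F[X] := X * (X ^ 2 - C c) * (X ^ 2 + C c)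
  have hp_deg : p.natDegree = 5 := by unfold p; compute_degree!
  have hp_ne : p ≠ 0 := fun h0 => by simp [h0] at hp_deg
  have hp_root : (Finset.univ : Finset F).val ⊆ p.roots := by
    intro t _
    rw [mem_roots hp_ne]
    simp only [p, IsRoot, eval_mul, eval_X, eval_pow, eval_sub, eval_add, eval_C]
    rcases eq_or_ne t 0 with rfl | ht0
    · ring
    rcases eq_or_ne (t ^ 2) c with htc | htc
    · rw [htc]; ring
    · rw [h t ht0 htc]; ring
  have := card_le_degree_of_subset_roots hp_root
  rw [Finset.card_univ, hp_deg] at this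
  omega

theorem exists_sq_sub_sq_eq_of_ne_zero [Fintype F] (h2 : (2 : F) ≠ 0) (hF : 5 < Fintype.card F)
    (c : F) : ∃ a b : F, a ≠ 0 ∧ b ≠ 0 ∧ b ^ 2 - a ^ 2 = c := by
  obtain ⟨t, ht0, htc, htc'⟩ := exists_ne_zero_and_sq_ne_and_sq_ne_neg hF c
  refine ⟨(c / t - t) / 2, (c / t + t) / 2, ?_, ?_, ?_⟩
  · refine div_ne_zero (fun h => htc ?_) h2
    field_simp at h
    linear_combination -h
  · refine div_ne_zero (fun h => htc' ?_) h2
    field_simp at h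
    linear_combination h
  · field_simp
    ring

theorem not_isSquare_neg_sq (h : ¬IsSquare (-1 : F)) {a : F} (ha : a ≠ 0) :
    ¬IsSquare (-a ^ 2) := by
  rintro ⟨x, hx⟩
  refine h ⟨x / a, ?_⟩
  field_simp
  linear_combination hx

theorem exists_nonsquare_sub_nonsquare_eq [Fintype F] (hF4 : Fintype.card F % 4 = 3)
    (hF5 : 5 < Fintype.card F) (c : F) :
    ∃ s s' : F, (s ≠ 0 ∧ ¬IsSquare s) ∧ (s' ≠ 0 ∧ ¬IsSquare s') ∧ c = s - s' := by
  have h_neg_one : ¬IsSquare (-1 : F) := by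
    rw [FiniteField.isSquare_neg_one_iff, hF4]
    decide
  have h2 : (2 : F) ≠ 0 := Ring.two_ne_zero fun h => by
    rw [FiniteField.even_card_iff_char_two] at h
    omega
  obtain ⟨a, b, ha, hb, hc⟩ := exists_sq_sub_sq_eq_of_ne_zero h2 hF5 c
  exact ⟨-a ^ 2, -b ^ 2, ⟨by simpa, not_isSquare_neg_sq h_neg_one ha⟩,
    ⟨by simpa, not_isSquare_neg_sq h_neg_one hb⟩, by linear_combination -hc⟩

end Field

theorem Nat.three_pow_mod_four_of_odd {m : ℕ} (hm : Odd m) : 3 ^ m % 4 = 3 := by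
  obtain ⟨k, rfl⟩ := hm
  rw [pow_succ, pow_mul, Nat.mul_mod, Nat.pow_mod]
  norm_num

theorem delta_nonsquares_eq_univ_general (m : ℕ) (hm : 3 ≤ m) (hmodd : Odd m)
    (F : Type) [Field F] [Fintype F]
    (hF : Fintype.card F = 3 ^ m) :
    {c : F | ∃ s s' : F,
        s ∈ {y : F | y ≠ 0 ∧ ¬∃ x : F, y = x ^ 2} ∧
        s' ∈ {y : F | y ≠ 0 ∧ ¬∃ x : F, y = x ^ 2} ∧
        c = s - s'} = Set.univ := by
  have hF4 : Fintype.card F % 4 = 3 := hF ▸ Nat.three_pow_mod_four_of_odd hmodd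
  have hF5 : 5 < Fintype.card F :=
    hF ▸ lt_of_lt_of_le (by norm_num) (Nat.pow_le_pow_right (by norm_num) hm)
  ext c
  simpa [← isSquare_iff_exists_sq] using exists_nonsquare_sub_nonsquare_eq hF4 hF5 c

/-- every element of `GF(3^m)`, `m ≥ 3` odd, is a difference of two
nonsquares. -/
theorem delta_nonsquares_eq_univ (m : ℕ) (hm : 3 ≤ m) (hmodd : Odd m)
    (F : Type) [Field F] [Fintype F] [Algebra (ZMod 3) F]
    (hF : Fintype.card F = 3 ^ m) :
    {c : F | ∃ s s' : F,
        s ∈ {y : F | y ≠ 0 ∧ ¬∃ x : F, y = x ^ 2} ∧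
        s' ∈ {y : F | y ≠ 0 ∧ ¬∃ x : F, y = x ^ 2} ∧
        c = s - s'} = Set.univ :=
  delta_nonsquares_eq_univ_general m hm hmodd F hF
end

section
/- Let q = 3^m with m ≥ 3 odd and Tr : GF(q) → GF(3) the trace. For each pair (a,b) ∈ GF(q)* × GF(q), there exists exactly one h ∈ GF(3) such that the vector (Tr(a x^2 + b x) + h)_{x ∈ GF(q)} has Hamming weight equal to d = 2·3^{m-1} - 3^{(m-1)/2}, the minimum nonzero weight of C(m,3). Consequently, the total number of codewords of weight d in C(m,3) is q(q-1). -/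
/-!
Write `N_a(s)` (`quadCount`) for the number of `x ∈ GF(q)` with `Tr(a x²) = s`. Completing the
square turns the weight of `(Tr(a x² + b x) + h)_x` into `q - N_a(e - h)` with `e = Tr(b² / 4a)`,
so the claim is that exactly one `s ∈ GF(3)` has `N_a(s) = B² + B`, where `q = 3 B²`.
The three numbers `N_a(s)` are pinned down by
* `N_a(0) = B²`: since `-1` is not a square (`m` is odd), `N_a(0)` does not depend on `a ≠ 0`,
  and double counting `{(a, x) | Tr(a x²) = 0}` then gives its value;
* `∑ N_a(s) = q`;
* `∑ N_a(s) N_a(s - 1) = (q - 1) q / 3`, by the change of variables `(x, y) ↦ (x + y, x - y)`,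
  which turns `Tr(a x²) - Tr(a y²)` into `Tr(a u v)`.
These force `{N_a(1), N_a(2)} = {B² + B, B² - B}`. The codewords of weight `d` are then
parametrised injectively by the pairs `(a, b)` with `a ≠ 0`.
-/

open Finset

theorem card_filter_trace_mul_eq (K : Type*) {L : Type*} [Field K] [Fintype K] [DecidableEq K]
    [Field L] [Fintype L] [Algebra K L] {u : L} (hu : u ≠ 0) (s : K) :
    #{x | Algebra.trace K L (u * x) = s} * Fintype.card K = Fintype.card L := by
  let f : L →+ K := (Algebra.trace K L).toAddMonoidHom.comp (AddMonoidHom.mulLeft u)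
  have hf : Function.Surjective f := fun t ↦ by
    obtain ⟨y, hy⟩ := Algebra.trace_surjective K L t
    exact ⟨u⁻¹ * y, by simp [f, hu, hy]⟩
  have hfib (t : K) : #{x | f x = t} = #{x | f x = s} :=
    AddMonoidHom.card_fiber_eq_of_mem_range f (hf t) (hf s)
  calc #{x | f x = s} * Fintype.card K = ∑ t : K, #{x | f x = t} := by
        simp [hfib, mul_comm]
    _ = Fintype.card L := (card_eq_sum_card_fiberwise (fun x _ ↦ mem_univ (f x))).symm

theorem FiniteField.isSquare_neg_of_not_isSquare {F : Type*} [Field F] [Fintype F] {r : F}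
    (h1 : ¬IsSquare (-1 : F)) (hr : ¬IsSquare r) : IsSquare (-r) := by
  classical
  have hr0 : -r ≠ 0 := neg_ne_zero.2 fun h ↦ hr (h ▸ IsSquare.zero)
  rw [← quadraticChar_one_iff_isSquare hr0, neg_eq_neg_one_mul, map_mul,
    quadraticChar_neg_one_iff_not_isSquare.2 h1, quadraticChar_neg_one_iff_not_isSquare.2 hr]
  norm_num

theorem FiniteField.not_isSquare_neg_one_of_card_eq_three_pow {F : Type*} [Field F] [Fintype F]
    {m : ℕ} (hF : Fintype.card F = 3 ^ m) (hm : Odd m) : ¬IsSquare (-1 : F) := by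
  obtain ⟨k, rfl⟩ := hm
  rw [FiniteField.isSquare_neg_one_iff, hF, pow_succ, pow_mul, Nat.mul_mod, Nat.pow_mod]
  norm_num

theorem card_filter_sub_eq {α M : Type*} [Fintype α] [AddCommGroup M] [Fintype M] [DecidableEq M]
    (f : α → M) (t : M) :
    #{p : α × α | f p.1 - f p.2 = t} = ∑ s, #{x | f x = s} * #{y | f y = s - t} := by
  simp_rw [card_filter (fun p : α × α ↦ _), Fintype.sum_prod_type, ← card_filter,
    ← sum_fiberwise univ f fun x ↦ #{y | f x - f y = t}]
  refine sum_congr rfl fun s _ ↦ ?_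
  rw [sum_congr rfl fun x hx ↦ by rw [(mem_filter.1 hx).2], sum_const, smul_eq_mul]
  congr 2
  ext y
  simp [eq_sub_iff_add_eq, add_comm, eq_comm]

section QuadraticForms

variable (K : Type*) {L : Type*} [Field K] [DecidableEq K] [Field L] [Fintype L] [Algebra K L]

noncomputable def quadCount (a : L) (s : K) : ℕ := #{x | Algebra.trace K L (a * x ^ 2) = s}

variable {K}

theorem sum_quadCount [Fintype K] (a : L) : ∑ s, quadCount K a s = Fintype.card L :=
  (card_eq_sum_card_fiberwise fun x _ ↦ mem_univ (Algebra.trace K L (a * x ^ 2))).symm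

theorem quadCount_mul_sq (a : L) {c : L} (hc : c ≠ 0) (s : K) :
    quadCount K (a * c ^ 2) s = quadCount K a s :=
  card_equiv (Equiv.mulLeft₀ c hc) fun x ↦ by simp [mul_pow, mul_assoc]

theorem quadCount_neg_zero (a : L) : quadCount K (-a) 0 = quadCount K a 0 := by
  simp [quadCount, neg_mul]

theorem quadCount_zero_eq_of_not_isSquare (h1 : ¬IsSquare (-1 : L)) {a a' : L} (ha : a ≠ 0)
    (ha' : a' ≠ 0) : quadCount K a' 0 = quadCount K a 0 := by
  have hr : a' / a ≠ 0 := div_ne_zero ha' ha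
  by_cases hsq : IsSquare (a' / a)
  · obtain ⟨c, hc⟩ := hsq
    have hc0 : c ≠ 0 := by rintro rfl; simp_all
    rw [show a' = a * c ^ 2 by rw [sq, ← hc]; field_simp, quadCount_mul_sq a hc0]
  · obtain ⟨c, hc⟩ := FiniteField.isSquare_neg_of_not_isSquare h1 hsq
    have hc0 : c ≠ 0 := by rintro rfl; simp_all
    rw [show a' = -a * c ^ 2 by rw [sq, ← hc]; field_simp, quadCount_mul_sq _ hc0,
      quadCount_neg_zero]

theorem sum_quadCount_zero_mul_card [Fintype K] :
    (∑ a : L, quadCount K a 0) * Fintype.card K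
      = Fintype.card L * Fintype.card K + (Fintype.card L - 1) * Fintype.card L := by
  classical
  have hswap :
      ∑ a : L, quadCount K a 0 = ∑ x : L, #{a | Algebra.trace K L (x ^ 2 * a) = 0} := by
    simp only [quadCount, card_filter, mul_comm _ (_ ^ 2)]
    exact sum_comm
  rw [hswap, Fintype.sum_eq_add_sum_compl 0, add_mul, sum_mul,
    sum_congr rfl fun x hx ↦ card_filter_trace_mul_eq K (pow_ne_zero 2 (by simpa using hx)) 0]
  simp [card_compl]

theorem quadCount_zero_mul_card [Fintype K] (h1 : ¬IsSquare (-1 : L)) {a : L} (ha : a ≠ 0) :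
    quadCount K a 0 * Fintype.card K = Fintype.card L := by
  classical
  have hsum := sum_quadCount_zero_mul_card (K := K) (L := L)
  have h0 : quadCount K (0 : L) 0 = Fintype.card L := by simp [quadCount]
  rw [Fintype.sum_eq_add_sum_compl 0, h0,
    sum_congr rfl fun a' ha' ↦ quadCount_zero_eq_of_not_isSquare h1 ha (by simpa using ha'),
    sum_const, card_compl, card_singleton, smul_eq_mul, add_mul, mul_assoc] at hsum
  have hq : 1 < Fintype.card L := Fintype.one_lt_card
  exact Nat.eq_of_mul_eq_mul_left (by omega : 0 < Fintype.card L - 1) (Nat.add_left_cancel hsum)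

theorem card_filter_trace_sq_sub_sq (h2 : (2 : L) ≠ 0) (a : L) (t : K) :
    #{p : L × L | Algebra.trace K L (a * p.1 ^ 2) - Algebra.trace K L (a * p.2 ^ 2) = t}
      = #{p : L × L | Algebra.trace K L (a * (p.1 * p.2)) = t} := by
  refine card_nbij' (fun p ↦ (p.1 + p.2, p.1 - p.2))
    (fun p ↦ ((p.1 + p.2) / 2, (p.1 - p.2) / 2))
    ?_ ?_ ?_ ?_
  · intro p hp
    simp only [coe_filter, mem_univ, true_and, Set.mem_ofPred_eq] at hp ⊢
    rw [← hp, ← map_sub]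
    ring_nf
  · intro p hp
    simp only [coe_filter, mem_univ, true_and, Set.mem_ofPred_eq] at hp ⊢
    rw [← hp, ← map_sub]
    congr 1
    field_simp
    ring
  · intro p _
    ext <;> field_simp <;> ring
  · intro p _
    ext <;> field_simp <;> ring

theorem card_filter_trace_mul_mul [Fintype K] {a : L} (ha : a ≠ 0) {t : K} (ht : t ≠ 0) :
    #{p : L × L | Algebra.trace K L (a * (p.1 * p.2)) = t} * Fintype.card K
      = (Fintype.card L - 1) * Fintype.card L := by
  classical
  simp_rw [card_filter (fun p : L × L ↦ _), Fintype.sum_prod_type, ← card_filter,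
    ← mul_assoc]
  rw [Fintype.sum_eq_add_sum_compl 0, add_mul, sum_mul,
    sum_congr rfl fun u hu ↦ card_filter_trace_mul_eq K (mul_ne_zero ha (by simpa using hu)) t]
  simp [card_compl, ht.symm]

theorem sum_quadCount_mul_quadCount_sub [Fintype K] (h2 : (2 : L) ≠ 0) {a : L} (ha : a ≠ 0)
    {t : K} (ht : t ≠ 0) :
    (∑ s, quadCount K a s * quadCount K a (s - t)) * Fintype.card K
      = (Fintype.card L - 1) * Fintype.card L := by
  rw [← card_filter_trace_mul_mul ha ht, ← card_filter_trace_sq_sub_sq h2]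
  exact congrArg (· * _) (card_filter_sub_eq _ t).symm

theorem card_filter_trace_quad_eq_quadCount (h2 : (2 : L) ≠ 0) {a : L} (ha : a ≠ 0) (b : L)
    (t : K) :
    #{x | Algebra.trace K L (a * x ^ 2 + b * x) = t}
      = quadCount K a (t + Algebra.trace K L (b ^ 2 / (4 * a))) := by
  refine card_equiv (Equiv.addRight (b / (2 * a))) fun x ↦ ?_
  have h4 : (4 : L) ≠ 0 := by
    rw [show (4 : L) = 2 ^ 2 by norm_num]
    exact pow_ne_zero 2 h2
  have hsq : a * (x + b / (2 * a)) ^ 2 = (a * x ^ 2 + b * x) + b ^ 2 / (4 * a) := by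
    field_simp
    ring
  simp [hsq]

end QuadraticForms

section Codewords

variable (K : Type*) {L : Type*} [Field K] [Field L] [Fintype L] [Algebra K L]

noncomputable def quadCodeword (a b : L) (h : K) : L → K :=
  fun x ↦ Algebra.trace K L (a * x ^ 2 + b * x) + h

variable {K}

theorem hammingNorm_quadCodeword_add_card_filter [DecidableEq K] (a b : L) (h : K) :
    hammingNorm (quadCodeword K a b h) + #{x | Algebra.trace K L (a * x ^ 2 + b * x) = -h}
      = Fintype.card L := by
  rw [add_comm, hammingNorm]
  simp only [quadCodeword, ne_eq, add_eq_zero_iff_eq_neg]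
  exact card_filter_add_card_filter_not _

theorem quadCodeword_injective [Fintype K] (h2 : (2 : L) ≠ 0) :
    Function.Injective fun t : L × L × K ↦ quadCodeword K t.1 t.2.1 t.2.2 := by
  rintro ⟨a, b, h⟩ ⟨a', b', h'⟩ heq
  have hx (x : L) := congrFun heq x
  simp only [quadCodeword] at hx
  have hh : h = h' := by simpa using hx 0
  subst hh
  have hdiff (x : L) : Algebra.trace K L ((a - a') * x ^ 2 + (b - b') * x) = 0 := by
    rw [show (a - a') * x ^ 2 + (b - b') * x
        = (a * x ^ 2 + b * x) - (a' * x ^ 2 + b' * x) by ring,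
      map_sub, add_right_cancel (hx x), sub_self]
  have ha : a - a' = 0 := by
    -- polarisation: `2 α x = q(x + 1) - q(x) - q(1)` for `q(x) = α x² + β x`
    have h2a : 2 * (a - a') = 0 := (traceForm_nondegenerate K L).1 _ fun x ↦ by
      rw [Algebra.traceForm_apply, show 2 * (a - a') * x =
        ((a - a') * (x + 1) ^ 2 + (b - b') * (x + 1)) - ((a - a') * x ^ 2 + (b - b') * x)
          - ((a - a') * 1 ^ 2 + (b - b') * 1) by ring, map_sub, map_sub, hdiff, hdiff, hdiff]
      simp
    exact (mul_eq_zero.1 h2a).resolve_left h2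
  have hb : b - b' = 0 := (traceForm_nondegenerate K L).1 _ fun x ↦ by
    rw [Algebra.traceForm_apply, ← hdiff x, ha, zero_mul, zero_add]
  rw [sub_eq_zero.1 ha, sub_eq_zero.1 hb]

end Codewords

theorem existsUnique_eq_sq_add_self {n : ZMod 3 → ℕ} {B : ℕ} (hB : 0 < B) (h0 : n 0 = B ^ 2)
    (hsum : ∑ s, n s = 3 * B ^ 2) (hcross : ∑ s, n s * n (s - 1) = (3 * B ^ 2 - 1) * B ^ 2) :
    ∃! s, n s = B ^ 2 + B := by
  have hsum' : n 0 + n 1 + n 2 = 3 * B ^ 2 := (Fin.sum_univ_three n).symm.trans hsum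
  have hcross' : n 0 * n 2 + n 1 * n 0 + n 2 * n 1 = (3 * B ^ 2 - 1) * B ^ 2 :=
    (Fin.sum_univ_three fun s : ZMod 3 ↦ n s * n (s - 1)).symm.trans hcross
  have hsq : ((n 1 : ℤ) - B ^ 2) ^ 2 = (B : ℤ) ^ 2 := by
    have hB1 : 1 ≤ 3 * B ^ 2 := by nlinarith
    rw [h0] at hsum' hcross'
    zify [hB1] at hsum' hcross'
    have h2 : (n 2 : ℤ) = 2 * B ^ 2 - n 1 := by linarith
    rw [h2] at hcross'
    linear_combination (-1 : ℤ) * hcross'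
  have hall : ∀ s : ZMod 3, s = 0 ∨ s = 1 ∨ s = 2 := by decide
  rcases sq_eq_sq_iff_eq_or_eq_neg.1 hsq with h | h
  · have h1 : n 1 = B ^ 2 + B := by zify; linarith
    refine ⟨1, h1, fun s hs ↦ ?_⟩
    rcases hall s with rfl | rfl | rfl <;> first | rfl | omega
  · have h1 : n 1 + B = B ^ 2 := by zify; linarith
    refine ⟨2, by omega, fun s hs ↦ ?_⟩
    rcases hall s with rfl | rfl | rfl <;> first | rfl | omega

theorem two_ne_zero_of_algebra_zmod_three {F : Type*} [Field F] [Algebra (ZMod 3) F] :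
    (2 : F) ≠ 0 := by
  have := charP_of_injective_algebraMap (algebraMap (ZMod 3) F).injective 3
  exact_mod_cast (CharP.cast_eq_zero_iff F 3 2).not.2 (by norm_num)

theorem pos_of_card_eq_three_mul_sq {F : Type*} [Fintype F] [Nonempty F] {B : ℕ}
    (hq : Fintype.card F = 3 * B ^ 2) : 0 < B :=
  Nat.pos_of_ne_zero fun hB ↦ by simp [hB] at hq

section Ternary

variable {F : Type*} [Field F] [Fintype F] [Algebra (ZMod 3) F] {B : ℕ}

theorem existsUnique_quadCount_eq (h1 : ¬IsSquare (-1 : F)) (hq : Fintype.card F = 3 * B ^ 2)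
    {a : F} (ha : a ≠ 0) : ∃! s : ZMod 3, quadCount (ZMod 3) a s = B ^ 2 + B := by
  refine existsUnique_eq_sq_add_self (pos_of_card_eq_three_mul_sq hq) ?_ ?_ ?_
  · have := quadCount_zero_mul_card h1 ha (K := ZMod 3)
    rw [ZMod.card, hq] at this
    omega
  · rw [sum_quadCount, hq]
  · have := sum_quadCount_mul_quadCount_sub two_ne_zero_of_algebra_zmod_three ha
      (one_ne_zero : (1 : ZMod 3) ≠ 0)
    rw [ZMod.card, hq] at this
    exact Nat.eq_of_mul_eq_mul_right three_pos (this.trans (by ring))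

theorem hammingNorm_quadCodeword_eq_iff (hq : Fintype.card F = 3 * B ^ 2) {a : F} (ha : a ≠ 0)
    (b : F) (h : ZMod 3) :
    hammingNorm (quadCodeword (ZMod 3) a b h) = 2 * B ^ 2 - B
      ↔ quadCount (ZMod 3) a (-h + Algebra.trace (ZMod 3) F (b ^ 2 / (4 * a))) = B ^ 2 + B := by
  have := hammingNorm_quadCodeword_add_card_filter a b h
  rw [card_filter_trace_quad_eq_quadCount two_ne_zero_of_algebra_zmod_three ha, hq] at this
  have hBB : B ≤ B ^ 2 := Nat.le_self_pow two_ne_zero B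
  omega

theorem existsUnique_hammingNorm_quadCodeword_eq (h1 : ¬IsSquare (-1 : F))
    (hq : Fintype.card F = 3 * B ^ 2) {a : F} (ha : a ≠ 0) (b : F) :
    ∃! h : ZMod 3, hammingNorm (quadCodeword (ZMod 3) a b h) = 2 * B ^ 2 - B := by
  simp_rw [hammingNorm_quadCodeword_eq_iff hq ha]
  obtain ⟨s, hs, huniq⟩ := existsUnique_quadCount_eq h1 hq ha
  refine ⟨Algebra.trace (ZMod 3) F (b ^ 2 / (4 * a)) - s, by simpa using hs, fun h hh ↦ ?_⟩
  linear_combination -huniq _ hh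

theorem ne_zero_of_hammingNorm_quadCodeword_eq (hq : Fintype.card F = 3 * B ^ 2) {a b : F}
    {h : ZMod 3} (hw : hammingNorm (quadCodeword (ZMod 3) a b h) = 2 * B ^ 2 - B) : a ≠ 0 := by
  rintro rfl
  have hsum := hammingNorm_quadCodeword_add_card_filter (0 : F) b h
  simp only [zero_mul, zero_add, hw, hq] at hsum
  have hB := pos_of_card_eq_three_mul_sq hq
  have hBB : B ≤ B ^ 2 := Nat.le_self_pow two_ne_zero B
  by_cases hb : b = 0
  · subst hb
    by_cases hh : h = 0 <;> simp [hh, hq] at hsum <;> omega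
  · have := card_filter_trace_mul_eq (ZMod 3) hb (-h)
    rw [ZMod.card, hq] at this
    omega

theorem ncard_setOf_hammingNorm_quadCodeword_eq (h1 : ¬IsSquare (-1 : F))
    (hq : Fintype.card F = 3 * B ^ 2) :
    {t : F × F × ZMod 3 |
        hammingNorm (quadCodeword (ZMod 3) t.1 t.2.1 t.2.2) = 2 * B ^ 2 - B}.ncard
      = Fintype.card F * (Fintype.card F - 1) := by
  set S :=
    {t : F × F × ZMod 3 | hammingNorm (quadCodeword (ZMod 3) t.1 t.2.1 t.2.2) = 2 * B ^ 2 - B}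
  have hinj : S.InjOn fun t ↦ (t.1, t.2.1) := by
    rintro ⟨a, b, h⟩ hS ⟨a', b', h'⟩ hS' heq
    simp only [Prod.mk.injEq] at heq ⊢
    obtain ⟨rfl, rfl⟩ := heq
    have ha := ne_zero_of_hammingNorm_quadCodeword_eq hq hS
    exact ⟨rfl, rfl, (existsUnique_hammingNorm_quadCodeword_eq h1 hq ha b).unique hS hS'⟩
  have himage : (fun t ↦ (t.1, t.2.1)) '' S = ({0}ᶜ : Set F) ×ˢ Set.univ := by
    ext ⟨a, b⟩
    simp only [Set.mem_image, Set.mem_prod, Set.mem_compl_singleton_iff, Set.mem_univ, and_true]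
    constructor
    · rintro ⟨⟨a, b, h⟩, hS, heq⟩
      simp only [Prod.mk.injEq] at heq
      obtain ⟨rfl, rfl⟩ := heq
      exact ne_zero_of_hammingNorm_quadCodeword_eq hq hS
    · intro ha
      obtain ⟨h, hS, -⟩ := existsUnique_hammingNorm_quadCodeword_eq h1 hq ha b
      exact ⟨(a, b, h), hS, rfl⟩
  rw [← hinj.ncard_image, himage, Set.ncard_prod, Set.ncard_univ, Set.ncard_compl,
    Set.ncard_singleton, Nat.card_eq_fintype_card, mul_comm]

end Ternary

theorem unique_h_min_weight_general (m : ℕ) (hmodd : Odd m)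
    (F : Type) [Field F] [Fintype F] [Algebra (ZMod 3) F]
    (hF : Fintype.card F = 3 ^ m) :
    (∀ a b : F, a ≠ 0 →
      ∃! h : ZMod 3,
        (Finset.univ.filter fun x : F =>
            Algebra.trace (ZMod 3) F (a * x ^ 2 + b * x) + h ≠ 0).card =
          2 * 3 ^ (m - 1) - 3 ^ ((m - 1) / 2)) ∧
    {c : F → ZMod 3 | (∃ a b : F, ∃ h : ZMod 3,
        c = fun x => Algebra.trace (ZMod 3) F (a * x ^ 2 + b * x) + h) ∧
      (Finset.univ.filter fun x : F => c x ≠ 0).card =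
        2 * 3 ^ (m - 1) - 3 ^ ((m - 1) / 2)}.ncard = 3 ^ m * (3 ^ m - 1) := by
  set B := 3 ^ ((m - 1) / 2)
  obtain ⟨k, hk⟩ := hmodd
  have hB : 3 ^ (m - 1) = B ^ 2 := by rw [← pow_mul]; congr 1; omega
  have hq : Fintype.card F = 3 * B ^ 2 := by rw [hF, ← hB, ← pow_succ']; congr 1; omega
  have h1 := FiniteField.not_isSquare_neg_one_of_card_eq_three_pow hF ⟨k, hk⟩
  rw [hB, ← hF]
  refine ⟨fun a b ha ↦ existsUnique_hammingNorm_quadCodeword_eq h1 hq ha b, ?_⟩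
  rw [← ncard_setOf_hammingNorm_quadCodeword_eq h1 hq,
    ← Set.ncard_image_of_injective _ (quadCodeword_injective two_ne_zero_of_algebra_zmod_three)]
  congr 1
  ext c
  constructor
  · rintro ⟨⟨a, b, h, rfl⟩, hw⟩
    exact ⟨(a, b, h), hw, rfl⟩
  · rintro ⟨⟨a, b, h⟩, hw, rfl⟩
    exact ⟨⟨a, b, h, rfl⟩, hw⟩

/-- for each `(a,b) ∈ GF(q)* × GF(q)` there is exactly one `h ∈ GF(3)`
such that the codeword `(Tr(a x² + b x) + h)_x` has weight `d = 2·3^{m-1} - 3^{(m-1)/2}`,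
and the number of weight-`d` codewords of `C(m,3)` is `q(q-1)`. -/
theorem unique_h_min_weight (m : ℕ) (hm : 3 ≤ m) (hmodd : Odd m)
    (F : Type) [Field F] [Fintype F] [DecidableEq F] [Algebra (ZMod 3) F]
    (hF : Fintype.card F = 3 ^ m) :
    (∀ a b : F, a ≠ 0 →
      ∃! h : ZMod 3,
        (Finset.univ.filter fun x : F =>
            Algebra.trace (ZMod 3) F (a * x ^ 2 + b * x) + h ≠ 0).card =
          2 * 3 ^ (m - 1) - 3 ^ ((m - 1) / 2)) ∧
    {c : F → ZMod 3 | (∃ a b : F, ∃ h : ZMod 3,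
        c = fun x => Algebra.trace (ZMod 3) F (a * x ^ 2 + b * x) + h) ∧
      (Finset.univ.filter fun x : F => c x ≠ 0).card =
        2 * 3 ^ (m - 1) - 3 ^ ((m - 1) / 2)}.ncard = 3 ^ m * (3 ^ m - 1) :=
  unique_h_min_weight_general m hmodd F hF
end

section
/- Let q = 3^m with m ≥ 2 and let α be a normal basis generator of GF(q) over GF(3) (i.e., {α^{3^i} : 0 ≤ i ≤ m-1} is a basis). Then the GF(3)-linear span of the functions x ↦ Tr(a x)·Tr(b x) over all a, b ∈ GF(q) equals the set of functions of the form x ↦ Σ_{j=0}^{m-1} Tr(c_j x^{3^j + 1}) with c_j ∈ GF(q). -/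
/-!
For a Galois extension, `Tr u * Tr v = ∑ σ, Tr (u * σ v)`; over a finite field the
automorphisms are the Frobenius powers `x ↦ x ^ 3 ^ k`, so
`Tr (a x) * Tr (b x) = ∑ k, Tr (a b^(3^k) x^(3^k+1))`.
Conversely, expanding `x = ∑ i, Tr (bᵢ x) • dᵢ` in the trace-dual basis `d` of a basis `b`
writes `x ↦ Tr (φ x * x)`, for any `GF(3)`-linear `φ` such as `x ↦ c x^(3^j)`, as a
`GF(3)`-combination of the products `Tr (bᵢ x) * Tr (bᵢ' x)`.
-/

open Finset Module

section Galois

variable {K L : Type*} [Field K] [Field L] [Algebra K L] [FiniteDimensional K L] [IsGalois K L]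

theorem Algebra.trace_mul_trace_eq_sum_algEquiv (u v : L) :
    Algebra.trace K L u * Algebra.trace K L v =
      ∑ σ : Gal(L/K), Algebra.trace K L (u * σ v) := by
  apply FaithfulSMul.algebraMap_injective K L
  simp only [map_mul, map_sum, trace_eq_sum_automorphisms, sum_mul_sum]
  conv_rhs => rw [sum_comm]
  exact sum_congr rfl fun σ _ => (Equiv.sum_comp (Equiv.mulLeft σ) fun τ => σ u * τ v).symm

end Galois

section Separable

variable (K L : Type*) [Field K] [Field L] [Algebra K L]

def traceProducts : Set (L → K) :=
  {f | ∃ a b : L, f = fun x => Algebra.trace K L (a * x) * Algebra.trace K L (b * x)}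

variable {K L} [FiniteDimensional K L] [Algebra.IsSeparable K L]

theorem trace_mul_self_mem_span_traceProducts (φ : L →ₗ[K] L) :
    (fun x => Algebra.trace K L (φ x * x)) ∈ Submodule.span K (traceProducts K L) := by
  let b := Module.finBasis K L
  let d := (Algebra.traceForm K L).dualBasis (traceForm_nondegenerate K L) b
  have hd : ∀ x i, d.repr x i = Algebra.trace K L (b i * x) := fun x i => by
    rw [LinearMap.BilinForm.dualBasis_repr_apply, Algebra.traceForm_apply, mul_comm]
  have expand : (fun x => Algebra.trace K L (φ x * x)) = ∑ i, ∑ j,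
      Algebra.trace K L (φ (d i) * d j) •
        fun x => Algebra.trace K L (b i * x) * Algebra.trace K L (b j * x) := by
    funext x
    conv_lhs => rw [← d.sum_repr x]
    simp only [map_sum, map_smul, sum_mul_sum, smul_mul_smul, Finset.sum_apply, Pi.smul_apply, hd,
      smul_eq_mul]
    exact sum_congr rfl fun i _ => sum_congr rfl fun j _ => by ring
  rw [expand]
  exact Submodule.sum_mem _ fun i _ => Submodule.sum_mem _ fun j _ =>
    Submodule.smul_mem _ _ (Submodule.subset_span ⟨b i, b j, rfl⟩)

end Separable

section FiniteField

variable (K : Type*) {L : Type*} [Field K] [Fintype K] [Field L] [Finite L] [Algebra K L]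

theorem FiniteField.trace_mul_trace_eq_sum_pow (u v : L) :
    Algebra.trace K L u * Algebra.trace K L v =
      ∑ i : Fin (finrank K L), Algebra.trace K L (u * v ^ Fintype.card K ^ (i : ℕ)) := by
  rw [Algebra.trace_mul_trace_eq_sum_algEquiv]
  refine (Fintype.sum_bijective _ (bijective_frobeniusAlgEquivOfAlgebraic_pow K L) _ _
    fun i => ?_).symm
  rw [AlgEquiv.coe_pow, coe_frobeniusAlgEquivOfAlgebraic_iterate]

theorem FiniteField.trace_mul_mul_trace_mul (a b x : L) :
    Algebra.trace K L (a * x) * Algebra.trace K L (b * x) =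
      ∑ i : Fin (finrank K L), Algebra.trace K L
        (a * b ^ Fintype.card K ^ (i : ℕ) * x ^ (Fintype.card K ^ (i : ℕ) + 1)) := by
  rw [trace_mul_trace_eq_sum_pow]
  exact sum_congr rfl fun i _ => by ring_nf

theorem FiniteField.trace_mul_pow_card_pow_add_one_mem_span (c : L) (j : ℕ) :
    (fun x => Algebra.trace K L (c * x ^ (Fintype.card K ^ j + 1))) ∈
      Submodule.span K (traceProducts K L) := by
  convert trace_mul_self_mem_span_traceProducts
    (LinearMap.mulLeft K c ∘ₗ (frobeniusAlgHom K L ^ j).toLinearMap) using 3 with x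
  simp [AlgHom.coe_pow, coe_frobeniusAlgHom, pow_iterate, pow_succ, mul_assoc]

end FiniteField

section TraceMonomialSum

variable (K L : Type*) [Field K] [Field L] [Algebra K L] {ι : Type*} [Fintype ι]

noncomputable def traceMonomialSum (e : ι → ℕ) : (ι → L) →ₗ[K] (L → K) where
  toFun c x := ∑ j, Algebra.trace K L (c j * x ^ e j)
  map_add' c d := by
    funext x
    simp only [Pi.add_apply, add_mul, map_add, sum_add_distrib]
  map_smul' r c := by
    funext x
    simp only [Pi.smul_apply, smul_mul_assoc, map_smul, smul_eq_mul, mul_sum, RingHom.id_apply]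

theorem traceMonomialSum_apply (e : ι → ℕ) (c : ι → L) :
    traceMonomialSum K L e c = fun x => ∑ j, Algebra.trace K L (c j * x ^ e j) :=
  rfl

end TraceMonomialSum

theorem span_tr_ax_tr_bx_general (m : ℕ)
    (F : Type) [Field F] [Fintype F] [Algebra (ZMod 3) F]
    (hF : Fintype.card F = 3 ^ m) :
    (Submodule.span (ZMod 3)
        {f : F → ZMod 3 | ∃ a b : F, f = fun x =>
          Algebra.trace (ZMod 3) F (a * x) * Algebra.trace (ZMod 3) F (b * x)} :
      Set (F → ZMod 3)) =
    {f : F → ZMod 3 | ∃ c : Fin m → F, f = fun x =>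
      ∑ j : Fin m, Algebra.trace (ZMod 3) F (c j * x ^ (3 ^ (j : ℕ) + 1))} := by
  have : Fact (Nat.Prime 3) := ⟨Nat.prime_three⟩
  obtain rfl : finrank (ZMod 3) F = m := by
    rw [Module.card_eq_pow_finrank (K := ZMod 3), ZMod.card] at hF
    exact Nat.pow_right_injective (by norm_num) hF
  have hq : Fintype.card (ZMod 3) = 3 := ZMod.card 3
  let Q := traceMonomialSum (ZMod 3) F fun j : Fin (finrank (ZMod 3) F) => 3 ^ (j : ℕ) + 1
  have hQ : {f : F → ZMod 3 | ∃ c : Fin (finrank (ZMod 3) F) → F, f = fun x =>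
      ∑ j : Fin (finrank (ZMod 3) F), Algebra.trace (ZMod 3) F (c j * x ^ (3 ^ (j : ℕ) + 1))} =
      LinearMap.range Q := by
    ext f
    simp only [Set.mem_ofPred_eq, SetLike.mem_coe, LinearMap.mem_range, Q, traceMonomialSum_apply,
      eq_comm]
  rw [hQ]
  change ((Submodule.span (ZMod 3) (traceProducts (ZMod 3) F)) : Set (F → ZMod 3)) = _
  congr 1
  refine le_antisymm (Submodule.span_le.2 ?_) ?_
  · rintro _ ⟨a, b, rfl⟩
    refine ⟨fun i => a * b ^ 3 ^ (i : ℕ), ?_⟩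
    simp only [Q, traceMonomialSum_apply, FiniteField.trace_mul_mul_trace_mul, hq]
  · rintro _ ⟨c, rfl⟩
    rw [traceMonomialSum_apply, ← Finset.sum_fn]
    refine Submodule.sum_mem _ fun j _ => ?_
    simpa only [hq] using FiniteField.trace_mul_pow_card_pow_add_one_mem_span (ZMod 3) (c j) j

/-- given a normal basis generator `α` of `GF(3^m)` over `GF(3)`,
the `GF(3)`-span of the functions `x ↦ Tr(a x)·Tr(b x)` equals the set of functions
`x ↦ ∑_j Tr(c_j x^{3^j + 1})`. -/
theorem span_tr_ax_tr_bx (m : ℕ) (hm : 2 ≤ m)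
    (F : Type) [Field F] [Fintype F] [Algebra (ZMod 3) F]
    (hF : Fintype.card F = 3 ^ m)
    (α : F) (hα : LinearIndependent (ZMod 3) fun i : Fin m => α ^ (3 ^ (i : ℕ))) :
    (Submodule.span (ZMod 3)
        {f : F → ZMod 3 | ∃ a b : F, f = fun x =>
          Algebra.trace (ZMod 3) F (a * x) * Algebra.trace (ZMod 3) F (b * x)} :
      Set (F → ZMod 3)) =
    {f : F → ZMod 3 | ∃ c : Fin m → F, f = fun x =>
      ∑ j : Fin m, Algebra.trace (ZMod 3) F (c j * x ^ (3 ^ (j : ℕ) + 1))} :=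
  span_tr_ax_tr_bx_general m F hF
end

section
/- Let q = 3^m with m ≥ 2. The GF(3)-linear span of the functions x ↦ Tr(a x^2)·Tr(b x) over all a, b ∈ GF(q) equals the set of functions x ↦ Σ_{j=0}^{m-1} Tr(c_j x^{2·3^j + 1}) with c_j ∈ GF(q). -/
/-!
For `u v ∈ L` with `[L : K] = n` and `q = #K`, the trace formula `Tr v = ∑_{j<n} v ^ q ^ j`
gives `Tr u · Tr v = ∑_j Tr (u v ^ q ^ j)`, hence
`Tr (a x ^ d) · Tr (b x) = ∑_j Tr (b a ^ q ^ j · x ^ (d q ^ j + 1))`: every product is a trace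
combination with coefficient vector `b • (a ^ q ^ j)_j`. Conversely the vectors `(a ^ q ^ j)_j`
span `L^n` over `L`, because the Frobenius powers `x ↦ x ^ q ^ j`, `j < n`, are distinct
characters and hence linearly independent (Dedekind); so every coefficient vector is an
`L`-combination of them and every trace combination lies in the span of the products.
-/

theorem LinearIndependent.span_range_eval_eq_top {ι X K : Type*} [Fintype ι] [Field K]
    {g : ι → X → K} (hg : LinearIndependent K g) :
    Submodule.span K (Set.range fun x i => g i x) = ⊤ := by
  classical
  rw [← Submodule.dualAnnihilator_eq_bot_iff, Submodule.eq_bot_iff]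
  intro φ hφ
  rw [Submodule.mem_dualAnnihilator] at hφ
  have hsum : ∑ i, φ (Pi.single i 1) • g i = 0 := funext fun x => by
    have : φ (fun i => g i x) = 0 := hφ _ (Submodule.subset_span ⟨x, rfl⟩)
    rw [pi_eq_sum_univ' (fun i => g i x), map_sum] at this
    simpa [mul_comm] using this
  ext i
  simpa using Fintype.linearIndependent_iff.1 hg _ hsum i

namespace FiniteField

variable (K L : Type*) [Field K] [Fintype K] [Field L] [Finite L] [Algebra K L]

local notation "q" => Fintype.card K
local notation "n" => Module.finrank K L

theorem linearIndependent_pow_card_pow :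
    LinearIndependent L (fun i : Fin n => fun x : L => x ^ q ^ (i : ℕ)) := by
  have hinj : Function.Injective fun i : Fin n =>
      ((frobeniusAlgEquivOfAlgebraic K L ^ (i : ℕ) : Gal(L/K)) : L →* L) := fun i j h =>
    (bijective_frobeniusAlgEquivOfAlgebraic_pow K L).1 <| AlgEquiv.ext fun x =>
      DFunLike.congr_fun h x
  have hpow (i : Fin n) :
      ⇑(frobeniusAlgEquivOfAlgebraic K L ^ (i : ℕ)) = (· ^ q ^ (i : ℕ)) := by
    rw [AlgEquiv.coe_pow, coe_frobeniusAlgEquivOfAlgebraic_iterate]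
  simpa [Function.comp_def, hpow] using (linearIndependent_monoidHom L L).comp _ hinj

variable {K L}

theorem trace_mul_trace (u v : L) :
    Algebra.trace K L u * Algebra.trace K L v =
      ∑ i : Fin n, Algebra.trace K L (u * v ^ q ^ (i : ℕ)) := by
  calc Algebra.trace K L u * Algebra.trace K L v
      = Algebra.trace K L (algebraMap K L (Algebra.trace K L v) * u) := by
        rw [← Algebra.smul_def, map_smul, smul_eq_mul, mul_comm]
    _ = _ := by
        rw [algebraMap_trace_eq_sum_pow, Finset.sum_mul, map_sum, ← Fin.sum_univ_eq_sum_range,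
          Nat.card_eq_fintype_card]
        simp_rw [mul_comm]

variable (K L) in
noncomputable def traceCombination (d : ℕ) : (Fin n → L) →ₗ[K] (L → K) where
  toFun c x := ∑ j, Algebra.trace K L (c j * x ^ (d * q ^ (j : ℕ) + 1))
  map_add' c c' := by
    funext x
    simp [add_mul, Finset.sum_add_distrib]
  map_smul' r c := by
    funext x
    simp [Finset.mul_sum]

theorem trace_mul_pow_mul_trace_eq (d : ℕ) (a b : L) :
    (fun x => Algebra.trace K L (a * x ^ d) * Algebra.trace K L (b * x)) =
      traceCombination K L d (fun j => b * a ^ q ^ (j : ℕ)) := by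
  funext x
  rw [mul_comm, trace_mul_trace]
  refine Finset.sum_congr rfl fun j _ => congrArg _ ?_
  ring

theorem span_trace_mul_trace (d : ℕ) :
    Submodule.span K {f : L → K | ∃ a b : L, f = fun x =>
      Algebra.trace K L (a * x ^ d) * Algebra.trace K L (b * x)} =
      LinearMap.range (traceCombination K L d) := by
  set G := {f : L → K | ∃ a b : L, f = fun x =>
    Algebra.trace K L (a * x ^ d) * Algebra.trace K L (b * x)}
  refine le_antisymm (Submodule.span_le.2 ?_) ?_
  · rintro _ ⟨a, b, rfl⟩
    exact ⟨_, (trace_mul_pow_mul_trace_eq d a b).symm⟩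
  rintro _ ⟨c, rfl⟩
  let V : Submodule L (Fin n → L) :=
    { carrier := {c | ∀ b : L, traceCombination K L d (b • c) ∈ Submodule.span K G}
      add_mem' := fun hc hc' b => by
        rw [smul_add, map_add]
        exact add_mem (hc b) (hc' b)
      zero_mem' := fun b => by simp
      smul_mem' := fun t c hc b => by
        rw [smul_smul]
        exact hc (b * t) }
  have hV : Submodule.span L (Set.range fun a (j : Fin n) => a ^ q ^ (j : ℕ)) ≤ V :=
    Submodule.span_le.2 fun _ ⟨a, ha⟩ b => Submodule.subset_span
      ⟨a, b, by rw [trace_mul_pow_mul_trace_eq, ← ha]; rfl⟩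
  rw [(linearIndependent_pow_card_pow K L).span_range_eval_eq_top] at hV
  simpa using hV (Submodule.mem_top (x := c)) 1

end FiniteField

theorem span_tr_ax2_tr_bx_general (m : ℕ)
    (F : Type) [Field F] [Fintype F] [Algebra (ZMod 3) F]
    (hF : Fintype.card F = 3 ^ m) :
    (Submodule.span (ZMod 3)
        {f : F → ZMod 3 | ∃ a b : F, f = fun x =>
          Algebra.trace (ZMod 3) F (a * x ^ 2) * Algebra.trace (ZMod 3) F (b * x)} :
      Set (F → ZMod 3)) =
    {f : F → ZMod 3 | ∃ c : Fin m → F, f = fun x =>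
      ∑ j : Fin m, Algebra.trace (ZMod 3) F (c j * x ^ (2 * 3 ^ (j : ℕ) + 1))} := by
  obtain rfl : Module.finrank (ZMod 3) F = m := by
    refine Nat.pow_right_injective (a := 3) (by norm_num) ?_
    simpa [hF] using (Module.card_eq_pow_finrank (K := ZMod 3) (V := F)).symm
  rw [FiniteField.span_trace_mul_trace]
  ext f
  simp [FiniteField.traceCombination, eq_comm]

/-- the `GF(3)`-span of the functions `x ↦ Tr(a x²)·Tr(b x)` equals the
set of functions `x ↦ ∑_j Tr(c_j x^{2·3^j + 1})`. -/
theorem span_tr_ax2_tr_bx (m : ℕ) (hm : 2 ≤ m)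
    (F : Type) [Field F] [Fintype F] [Algebra (ZMod 3) F]
    (hF : Fintype.card F = 3 ^ m) :
    (Submodule.span (ZMod 3)
        {f : F → ZMod 3 | ∃ a b : F, f = fun x =>
          Algebra.trace (ZMod 3) F (a * x ^ 2) * Algebra.trace (ZMod 3) F (b * x)} :
      Set (F → ZMod 3)) =
    {f : F → ZMod 3 | ∃ c : Fin m → F, f = fun x =>
      ∑ j : Fin m, Algebra.trace (ZMod 3) F (c j * x ^ (2 * 3 ^ (j : ℕ) + 1))} :=
  span_tr_ax2_tr_bx_general m F hF
end

section
/- Let m ≥ 5 be odd, q = 3^m, n = q − 1. Define subsets of Z/nZ: A₁ = {−(2·3^i + 2) mod n : 0 ≤ i ≤ (m−1)/2}, B = {−(2·3^i + 1) mod n : 0 ≤ i ≤ m−1}, C₁ = {−(3^i + 1) mod n : 0 ≤ i ≤ (m−1)/2}. For i ∈ Z/nZ let S_i = {i·3^j mod n : 0 ≤ j ≤ m−1} denote the 3-cyclotomic coset of i. Then the union of the cosets S_i over i ∈ A₁ ∪ B ∪ C₁ has cardinality exactly 2m². Moreover, each coset S_i for i in these sets has size m; the cosets from B are pairwise disjoint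 and disjoint from all cosets from A₁ and C₁; the cosets from A₁ are pairwise disjoint; the cosets from C₁ are pairwise disjoint; and exactly one pair, consisting of one coset from A₁ and one from C₁, coincides. -/
open Finset

namespace CycCount

def dg (c e t : ℕ) : ℕ := if t = e then c else 0

lemma digits_unique (M : ℕ) : ∀ (f g : ℕ → ℕ), (∀ i, f i < 3) → (∀ i, g i < 3) →
    (∑ i ∈ Finset.range M, f i * 3 ^ i) = (∑ i ∈ Finset.range M, g i * 3 ^ i) →
    ∀ i, i < M → f i = g i := by
  induction M with
  | zero => intro f g _ _ _ i hi; omega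
  | succ M ih =>
    intro f g hf hg h i hi
    simp only [Finset.sum_range_succ'] at h
    have e1 : ∀ (f : ℕ → ℕ), (∑ i ∈ Finset.range M, f (i+1) * 3 ^ (i+1))
        = 3 * ∑ i ∈ Finset.range M, f (i+1) * 3 ^ i := by
      intro f; rw [Finset.mul_sum]; exact Finset.sum_congr rfl fun x _ => by ring
    rw [e1 f, e1 g] at h
    simp only [pow_zero, mul_one] at h
    have hf0 := hf 0; have hg0 := hg 0
    have h2 : (∑ i ∈ Finset.range M, f (i+1) * 3 ^ i) = ∑ i ∈ Finset.range M, g (i+1) * 3 ^ i := by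
      omega
    rcases i with _ | j
    · omega
    · exact ih (fun t => f (t+1)) (fun t => g (t+1)) (fun t => hf _) (fun t => hg _) h2 j (by omega)

lemma sum_dg (M c e : ℕ) (he : e < M) : (∑ t ∈ Finset.range M, dg c e t * 3 ^ t) = c * 3 ^ e := by
  rw [Finset.sum_eq_single e]
  · simp [dg]
  · intro b _ hb; simp [dg, hb]
  · intro h; exact absurd (Finset.mem_range.mpr he) h

lemma two_term_eq (c₁ c₂ d₁ d₂ a b c d : ℕ) (hc₁ : c₁ < 3) (hc₂ : c₂ < 3) (hd₁ : d₁ < 3)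
    (hd₂ : d₂ < 3) (hab : a = b → c₁ + c₂ < 3) (hcd : c = d → d₁ + d₂ < 3)
    (h : c₁ * 3 ^ a + c₂ * 3 ^ b = d₁ * 3 ^ c + d₂ * 3 ^ d) :
    ∀ t, dg c₁ a t + dg c₂ b t = dg d₁ c t + dg d₂ d t := by
  intro t
  have hfb : ∀ i, dg c₁ a i + dg c₂ b i < 3 := by
    intro i; simp only [dg]; split_ifs <;> omega
  have hgb : ∀ i, dg d₁ c i + dg d₂ d i < 3 := by
    intro i; simp only [dg]; split_ifs <;> omega
  have hsum : (∑ x ∈ Finset.range (a+b+c+d+t+1), (dg c₁ a x + dg c₂ b x) * 3^x)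
      = ∑ x ∈ Finset.range (a+b+c+d+t+1), (dg d₁ c x + dg d₂ d x) * 3^x := by
    have e1 : ∀ (u₁ u₂ p q : ℕ), (∑ x ∈ Finset.range (a+b+c+d+t+1), (dg u₁ p x + dg u₂ q x) * 3^x)
        = (∑ x ∈ Finset.range (a+b+c+d+t+1), dg u₁ p x * 3^x)
          + ∑ x ∈ Finset.range (a+b+c+d+t+1), dg u₂ q x * 3^x := by
      intro u₁ u₂ p q; rw [← Finset.sum_add_distrib]
      exact Finset.sum_congr rfl fun x _ => by ring
    rw [e1, e1, sum_dg _ _ _ (by omega), sum_dg _ _ _ (by omega), sum_dg _ _ _ (by omega),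
      sum_dg _ _ _ (by omega), h]
  exact digits_unique _ _ _ hfb hgb hsum t (by omega)

lemma cast_inj_of_lt {n : ℕ} [NeZero n] {u v : ℕ} (hu : u < n) (hv : v < n)
    (h : (u : ZMod n) = v) : u = v := by
  rw [← ZMod.val_cast_of_lt hu, ← ZMod.val_cast_of_lt hv, h]

lemma hq3 {n m : ℕ} [NeZero n] (hn : n = 3^m - 1) : (3 : ZMod n)^m = 1 := by
  have h1 : (3:ℕ)^m = n + 1 := by
    have : 1 ≤ (3:ℕ)^m := Nat.one_le_pow _ _ (by norm_num)
    omega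
  calc (3:ZMod n)^m = ((3^m : ℕ) : ZMod n) := by push_cast; ring
  _ = ((n + 1 : ℕ) : ZMod n) := by rw [h1]
  _ = 1 := by push_cast [ZMod.natCast_self]; ring

lemma pow3 {n m : ℕ} [NeZero n] (hn : n = 3^m - 1) (hm : 0 < m) (a : ℕ) :
    (3 : ZMod n)^a = 3^(a % m) := by
  conv_lhs => rw [← Nat.div_add_mod a m]
  rw [pow_add, pow_mul, hq3 hn, one_pow, one_mul]

lemma val_lt {n m : ℕ} (hn : n = 3^m - 1) (hm : 5 ≤ m) (c₁ c₂ e₁ e₂ : ℕ)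
    (hc₁ : c₁ < 3) (hc₂ : c₂ < 3) (he₁ : e₁ < m) (he₂ : e₂ < m)
    (hee : e₁ = e₂ → c₁ + c₂ < 3) :
    c₁*3^e₁ + c₂*3^e₂ < n := by
  subst hn
  have h9 : (3:ℕ)^m = 9 * 3^(m-2) := by
    calc (3:ℕ)^m = 3^(m-2+2) := by rw [show m-2+2 = m by omega]
    _ = 9 * 3^(m-2) := by rw [pow_add]; ring
  have ht : 3 ≤ (3:ℕ)^(m-2) := by
    calc (3:ℕ) = 3^1 := by norm_num
    _ ≤ 3^(m-2) := Nat.pow_le_pow_right (by norm_num) (by omega)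
  have hb : ∀ e, e < m → (3:ℕ)^e ≤ 3*3^(m-2) := by
    intro e he'
    calc (3:ℕ)^e ≤ 3^(m-1) := Nat.pow_le_pow_right (by norm_num) (by omega)
    _ = 3*3^(m-2) := by rw [show m-1 = (m-2)+1 by omega]; ring
  rcases eq_or_ne e₁ e₂ with h | h
  · subst h
    have h1 := hb e₁ he₁
    have h3 : (c₁+c₂)*3^e₁ ≤ 2*3^e₁ := Nat.mul_le_mul (by omega) (le_refl _)
    have h2 : c₁*3^e₁ + c₂*3^e₁ = (c₁+c₂)*3^e₁ := by ring
    omega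
  · rcases Nat.lt_or_ge e₁ e₂ with hlt | hge
    · have h1 : (3:ℕ)^e₁ ≤ 3^(m-2) := Nat.pow_le_pow_right (by norm_num) (by omega)
      have h2 := hb e₂ he₂
      have h3 : c₁*3^e₁ ≤ 2*3^e₁ := Nat.mul_le_mul (by omega) (le_refl _)
      have h4 : c₂*3^e₂ ≤ 2*3^e₂ := Nat.mul_le_mul (by omega) (le_refl _)
      omega
    · have hlt2 : e₂ < e₁ := by omega
      have h1 : (3:ℕ)^e₂ ≤ 3^(m-2) := Nat.pow_le_pow_right (by norm_num) (by omega)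
      have h2 := hb e₁ he₁
      have h3 : c₁*3^e₁ ≤ 2*3^e₁ := Nat.mul_le_mul (by omega) (le_refl _)
      have h4 : c₂*3^e₂ ≤ 2*3^e₂ := Nat.mul_le_mul (by omega) (le_refl _)
      omega

lemma zmaster {n m : ℕ} [NeZero n] (hn : n = 3^m - 1) (hm : 5 ≤ m)
    (c₁ c₂ d₁ d₂ e₁ e₂ f₁ f₂ : ℕ) (hc₁ : c₁ < 3) (hc₂ : c₂ < 3) (hd₁ : d₁ < 3) (hd₂ : d₂ < 3)
    (he : e₁ % m = e₂ % m → c₁ + c₂ < 3) (hf : f₁ % m = f₂ % m → d₁ + d₂ < 3)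
    (h : (c₁ : ZMod n)*3^e₁ + (c₂ : ZMod n)*3^e₂ = (d₁ : ZMod n)*3^f₁ + (d₂ : ZMod n)*3^f₂) :
    c₁*3^(e₁ % m) + c₂*3^(e₂ % m) = d₁*3^(f₁ % m) + d₂*3^(f₂ % m) := by
  have hm0 : 0 < m := by omega
  apply cast_inj_of_lt (n := n)
    (val_lt hn hm _ _ _ _ hc₁ hc₂ (Nat.mod_lt _ hm0) (Nat.mod_lt _ hm0) he)
    (val_lt hn hm _ _ _ _ hd₁ hd₂ (Nat.mod_lt _ hm0) (Nat.mod_lt _ hm0) hf)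
  push_cast
  simp only [← pow3 hn hm0]
  linear_combination h

lemma N1 {a b c d : ℕ} (hab : a ≠ b) (hcd : c ≠ d)
    (h : 2*3^a + 1*3^b = 2*3^c + 1*3^d) : a = c ∧ b = d := by
  have H := two_term_eq 2 1 2 1 a b c d (by norm_num) (by norm_num) (by norm_num) (by norm_num)
    (fun h' => absurd h' hab) (fun h' => absurd h' hcd) h
  have h1 := H a; have h2 := H b
  simp only [dg] at h1 h2
  split_ifs at h1 h2 <;> omega

lemma N2 {a b c d : ℕ} (hcd : c ≠ d)
    (h : 1*3^a + 0*3^b = 2*3^c + 1*3^d) : False := by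
  have H := two_term_eq 1 0 2 1 a b c d (by norm_num) (by norm_num) (by norm_num) (by norm_num)
    (fun _ => by norm_num) (fun h' => absurd h' hcd) h
  have h1 := H c
  simp only [dg] at h1
  split_ifs at h1 <;> omega

lemma N3 {a b c d : ℕ} (hab : a ≠ b) (hcd : c ≠ d)
    (h : 2*3^a + 1*3^b = 2*3^c + 2*3^d) : False := by
  have H := two_term_eq 2 1 2 2 a b c d (by norm_num) (by norm_num) (by norm_num) (by norm_num)
    (fun h' => absurd h' hab) (fun h' => absurd h' hcd) h
  have h1 := H b
  simp only [dg] at h1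
  split_ifs at h1 <;> omega

lemma N4 {a b c d : ℕ} (hab : a ≠ b) (hcd : c ≠ d)
    (h : 2*3^a + 1*3^b = 1*3^c + 1*3^d) : False := by
  have H := two_term_eq 2 1 1 1 a b c d (by norm_num) (by norm_num) (by norm_num) (by norm_num)
    (fun h' => absurd h' hab) (fun _ => by norm_num) h
  have h1 := H a
  simp only [dg] at h1
  split_ifs at h1 <;> omega

lemma N5 {a b c d : ℕ} (hab : a ≠ b)
    (h : 2*3^a + 1*3^b = 2*3^c + 0*3^d) : False := by
  have H := two_term_eq 2 1 2 0 a b c d (by norm_num) (by norm_num) (by norm_num) (by norm_num)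
    (fun h' => absurd h' hab) (fun _ => by norm_num) h
  have h1 := H b
  simp only [dg] at h1
  split_ifs at h1 <;> omega

lemma N5b {a b c d : ℕ} (hab : a ≠ b)
    (h : 2*3^a + 1*3^b = 1*3^c + 0*3^d) : False := by
  have H := two_term_eq 2 1 1 0 a b c d (by norm_num) (by norm_num) (by norm_num) (by norm_num)
    (fun h' => absurd h' hab) (fun _ => by norm_num) h
  have h1 := H a; have h2 := H b
  simp only [dg] at h1 h2
  split_ifs at h1 h2 <;> omega

lemma N6 {a b c d : ℕ} (hcd : c ≠ d)
    (h : 1*3^a + 0*3^b = 1*3^c + 1*3^d) : False := by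
  have H := two_term_eq 1 0 1 1 a b c d (by norm_num) (by norm_num) (by norm_num) (by norm_num)
    (fun _ => by norm_num) (fun _ => by norm_num) h
  have h1 := H c; have h2 := H d
  simp only [dg] at h1 h2
  split_ifs at h1 h2 <;> omega

lemma N7 {a b c d : ℕ} (hcd : c ≠ d)
    (h : 1*3^a + 0*3^b = 2*3^c + 2*3^d) : False := by
  have H := two_term_eq 1 0 2 2 a b c d (by norm_num) (by norm_num) (by norm_num) (by norm_num)
    (fun _ => by norm_num) (fun h' => absurd h' hcd) h
  have h1 := H c
  simp only [dg] at h1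
  split_ifs at h1 <;> omega

lemma N8 {a b c d : ℕ}
    (h : 1*3^a + 0*3^b = 2*3^c + 0*3^d) : False := by
  have H := two_term_eq 1 0 2 0 a b c d (by norm_num) (by norm_num) (by norm_num) (by norm_num)
    (fun _ => by norm_num) (fun _ => by norm_num) h
  have h1 := H c
  simp only [dg] at h1
  split_ifs at h1 <;> omega

lemma N9 {a b c d : ℕ} (hab : a ≠ b) (hcd : c ≠ d)
    (h : 2*3^a + 2*3^b = 2*3^c + 2*3^d) : (a = c ∧ b = d) ∨ (a = d ∧ b = c) := by
  have H := two_term_eq 2 2 2 2 a b c d (by norm_num) (by norm_num) (by norm_num) (by norm_num)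
    (fun h' => absurd h' hab) (fun h' => absurd h' hcd) h
  have h1 := H a; have h2 := H b
  simp only [dg] at h1 h2
  split_ifs at h1 h2 <;> omega

lemma N10 {a b c d : ℕ} (hab : a ≠ b) (hcd : c ≠ d)
    (h : 1*3^a + 1*3^b = 2*3^c + 2*3^d) : False := by
  have H := two_term_eq 1 1 2 2 a b c d (by norm_num) (by norm_num) (by norm_num) (by norm_num)
    (fun _ => by norm_num) (fun h' => absurd h' hcd) h
  have h1 := H a
  simp only [dg] at h1
  split_ifs at h1 <;> omega

lemma N11 {a b c d : ℕ} (hab : a ≠ b)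
    (h : 2*3^a + 2*3^b = 2*3^c + 0*3^d) : False := by
  have H := two_term_eq 2 2 2 0 a b c d (by norm_num) (by norm_num) (by norm_num) (by norm_num)
    (fun h' => absurd h' hab) (fun _ => by norm_num) h
  have h1 := H a; have h2 := H b
  simp only [dg] at h1 h2
  split_ifs at h1 h2 <;> omega

lemma N12 {a b c d : ℕ} (hab : a ≠ b) (hcd : c ≠ d)
    (h : 1*3^a + 1*3^b = 1*3^c + 1*3^d) : (a = c ∧ b = d) ∨ (a = d ∧ b = c) := by
  have H := two_term_eq 1 1 1 1 a b c d (by norm_num) (by norm_num) (by norm_num) (by norm_num)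
    (fun _ => by norm_num) (fun _ => by norm_num) h
  have h1 := H a; have h2 := H b
  simp only [dg] at h1 h2
  split_ifs at h1 h2 <;> omega

lemma N13 {a b c d : ℕ} (hab : a ≠ b)
    (h : 1*3^a + 1*3^b = 2*3^c + 0*3^d) : False := by
  have H := two_term_eq 1 1 2 0 a b c d (by norm_num) (by norm_num) (by norm_num) (by norm_num)
    (fun _ => by norm_num) (fun _ => by norm_num) h
  have h1 := H a
  simp only [dg] at h1
  split_ifs at h1 <;> omega

lemma N14 {a b c d : ℕ}
    (h : 1*3^a + 0*3^b = 1*3^c + 0*3^d) : a = c := by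
  have h' : (3:ℕ)^a = 3^c := by simpa using h
  exact Nat.pow_right_injective (by norm_num) h'

lemma N15 {a b c d : ℕ}
    (h : 2*3^a + 0*3^b = 2*3^c + 0*3^d) : a = c := by
  have h' : 2*(3:ℕ)^a = 2*3^c := by simpa using h
  exact Nat.pow_right_injective (by norm_num)
    (Nat.eq_of_mul_eq_mul_left (by norm_num) h')

end CycCount

open CycCount

/-- counting the 3-cyclotomic cosets modulo `n = 3^m - 1` of the elements
of `A₁ = {-(2·3^i+2) : 0 ≤ i ≤ (m-1)/2}`, `B = {-(2·3^i+1) : 0 ≤ i ≤ m-1}` and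
`C₁ = {-(3^i+1) : 0 ≤ i ≤ (m-1)/2}`: their union has cardinality `2m²`, each coset has
size `m`; the cosets from `B` are pairwise disjoint and disjoint from all cosets from
`A₁` and `C₁`; the cosets from `A₁` (resp. `C₁`) are pairwise disjoint; and exactly one
pair consisting of one coset from `A₁` and one from `C₁` coincides (all other such pairs
being disjoint). -/
theorem cyclotomic_coset_count (m : ℕ) (hm : 5 ≤ m) (hmodd : Odd m)
    (n : ℕ) (hn : n = 3 ^ m - 1) [NeZero n]
    (S : ZMod n → Finset (ZMod n))
    (hS : ∀ i : ZMod n, S i = (Finset.range m).image fun j => i * 3 ^ j)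
    (fA fB fC : ℕ → ZMod n)
    (hfA : ∀ i, fA i = -(2 * 3 ^ i + 2))
    (hfB : ∀ i, fB i = -(2 * 3 ^ i + 1))
    (hfC : ∀ i, fC i = -(3 ^ i + 1)) :
    (((((Finset.range ((m + 1) / 2)).image fA ∪ (Finset.range m).image fB ∪
        (Finset.range ((m + 1) / 2)).image fC)).biUnion S).card = 2 * m ^ 2) ∧
    (∀ i ∈ (Finset.range ((m + 1) / 2)).image fA ∪ (Finset.range m).image fB ∪
        (Finset.range ((m + 1) / 2)).image fC, (S i).card = m) ∧
    (∀ i ∈ Finset.range m, ∀ j ∈ Finset.range m, i ≠ j →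
      Disjoint (S (fB i)) (S (fB j))) ∧
    (∀ i ∈ Finset.range m, ∀ j ∈ Finset.range ((m + 1) / 2),
      Disjoint (S (fB i)) (S (fA j)) ∧ Disjoint (S (fB i)) (S (fC j))) ∧
    (∀ i ∈ Finset.range ((m + 1) / 2), ∀ j ∈ Finset.range ((m + 1) / 2), i ≠ j →
      Disjoint (S (fA i)) (S (fA j)) ∧ Disjoint (S (fC i)) (S (fC j))) ∧
    (∀ i ∈ Finset.range ((m + 1) / 2), ∀ j ∈ Finset.range ((m + 1) / 2),
      ¬Disjoint (S (fA i)) (S (fC j)) → S (fA i) = S (fC j)) ∧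
    (∃! p : Fin ((m + 1) / 2) × Fin ((m + 1) / 2),
      S (fA (p.1 : ℕ)) = S (fC (p.2 : ℕ))) := by
  obtain ⟨r, hr⟩ := hmodd
  have hm0 : 0 < m := by omega
  have hq : (3 : ZMod n)^m = 1 := hq3 hn
  have hsmall : ∀ a, a < m → a % m = a := fun a ha => Nat.mod_eq_of_lt ha
  have hdich : ∀ a, a < 2*m → a % m = a ∨ (a % m = a - m ∧ m ≤ a) := by
    intro a ha
    rcases Nat.lt_or_ge a m with h | h
    · exact Or.inl (Nat.mod_eq_of_lt h)
    · exact Or.inr ⟨by rw [Nat.mod_eq_sub_mod h, Nat.mod_eq_of_lt (by omega)], h⟩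
  have hpk : ∀ i k, 1 ≤ i → i < m → k < m → (i+k) % m ≠ k % m := by
    intro i k hi1 hi hk
    rw [hsmall k hk]
    rcases hdich (i+k) (by omega) with h' | ⟨h', h''⟩ <;> rw [h'] <;> omega
  have hp1 : ∀ k, k < m → (k+1) % m ≠ k % m := by
    intro k hk
    rw [hsmall k hk]
    rcases hdich (k+1) (by omega) with h' | ⟨h', h''⟩ <;> rw [h'] <;> omega
  -- membership and basic coset structure
  have hmem : ∀ x t : ZMod n, t ∈ S x ↔ ∃ k, k < m ∧ x * 3^k = t := by
    intro x t; rw [hS]; simp [Finset.mem_image, Finset.mem_range]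
  have hsub : ∀ (x : ZMod n) (k : ℕ), S (x * 3^k) ⊆ S x := by
    intro x k t ht
    rw [hmem] at ht ⊢
    obtain ⟨j, hj, rfl⟩ := ht
    refine ⟨(k+j) % m, Nat.mod_lt _ hm0, ?_⟩
    rw [← pow3 hn hm0 (k+j), pow_add, ← mul_assoc]
  have hx3 : ∀ (x : ZMod n) (k : ℕ), k ≤ m → x * 3^k * 3^(m-k) = x := by
    intro x k hk
    rw [mul_assoc, ← pow_add, show k + (m-k) = m by omega, hq, mul_one]
  have hshift : ∀ (x : ZMod n) (k : ℕ), k ≤ m → S (x * 3^k) = S x := by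
    intro x k hk
    refine Finset.Subset.antisymm (hsub x k) ?_
    have h2 := hsub (x * 3^k) (m - k)
    rwa [hx3 x k hk] at h2
  have hrel : ∀ x y : ZMod n, ¬ Disjoint (S x) (S y) → ∃ k, k < m ∧ y = x * 3^k := by
    intro x y h
    obtain ⟨t, htx, hty⟩ := Finset.not_disjoint_iff.mp h
    rw [hmem] at htx hty
    obtain ⟨j, hj, hjx⟩ := htx
    obtain ⟨l, hl, hly⟩ := hty
    refine ⟨(j + (m - l)) % m, Nat.mod_lt _ hm0, ?_⟩
    calc y = y * 3^l * 3^(m-l) := (hx3 y l (by omega)).symm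
    _ = x * 3^j * 3^(m-l) := by rw [hly, ← hjx]
    _ = x * 3^((j + (m-l)) % m) := by rw [mul_assoc, ← pow_add, pow3 hn hm0]
  have hSeq' : ∀ (x y : ZMod n), (∃ k, k < m ∧ y = x*3^k) → S y = S x := by
    rintro x y ⟨k, hk, rfl⟩; exact hshift x k (by omega)
  have hSne : ∀ x : ZMod n, (S x).Nonempty := by
    intro x; rw [hS]; exact (Finset.nonempty_range_iff.mpr (by omega)).image _
  have hA0C1 : fA 0 = fC 1 := by rw [hfA, hfC]; norm_num
  -- ===== pairwise-relation blocks =====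
  have hBB : ∀ i j k, i < m → j < m → k < m → fB j = fB i * 3^k → i = j := by
    intro i j k hi hj hk heq
    rw [hfB, hfB] at heq
    rcases Nat.eq_zero_or_pos i with rfl | hi1 <;> rcases Nat.eq_zero_or_pos j with rfl | hj1
    · rfl
    · exfalso
      have hz : ((1:ℕ):ZMod n)*3^(k+1) + ((0:ℕ):ZMod n)*3^(k+1)
          = ((2:ℕ):ZMod n)*3^j + ((1:ℕ):ZMod n)*3^0 := by push_cast; linear_combination heq
      have h := zmaster hn hm 1 0 2 1 (k+1) (k+1) j 0 (by norm_num) (by norm_num) (by norm_num)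
        (by norm_num) (fun _ => by norm_num) (by rw [hsmall j hj, Nat.zero_mod]; omega) hz
      rw [hsmall j hj, Nat.zero_mod] at h
      exact N2 (by omega) h
    · exfalso
      have hz : ((2:ℕ):ZMod n)*3^(i+k) + ((1:ℕ):ZMod n)*3^k
          = ((1:ℕ):ZMod n)*3^1 + ((0:ℕ):ZMod n)*3^0 := by push_cast; linear_combination heq
      have h := zmaster hn hm 2 1 1 0 (i+k) k 1 0 (by norm_num) (by norm_num) (by norm_num)
        (by norm_num) (fun hc => absurd hc (hpk i k hi1 hi hk)) (fun _ => by norm_num) hz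
      rw [hsmall k hk] at h
      exact N5b (by have := hpk i k hi1 hi hk; rwa [hsmall k hk] at this) h
    · have hz : ((2:ℕ):ZMod n)*3^(i+k) + ((1:ℕ):ZMod n)*3^k
          = ((2:ℕ):ZMod n)*3^j + ((1:ℕ):ZMod n)*3^0 := by push_cast; linear_combination heq
      have h := zmaster hn hm 2 1 2 1 (i+k) k j 0 (by norm_num) (by norm_num) (by norm_num)
        (by norm_num) (fun hc => absurd hc (hpk i k hi1 hi hk))
        (by rw [hsmall j hj, Nat.zero_mod]; omega) hz
      rw [hsmall k hk, hsmall j hj, Nat.zero_mod] at h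
      obtain ⟨h1, h2⟩ := N1 (by have := hpk i k hi1 hi hk; rwa [hsmall k hk] at this)
        (by omega) h
      rcases hdich (i+k) (by omega) with h' | ⟨h', h''⟩ <;> rw [h'] at h1 <;> omega
  have hBA : ∀ i j k, i < m → j < (m+1)/2 → k < m → fA j = fB i * 3^k → False := by
    intro i j k hi hj hk heq
    rw [hfA, hfB] at heq
    have hjm : j < m := by omega
    rcases Nat.eq_zero_or_pos i with rfl | hi1 <;> rcases Nat.eq_zero_or_pos j with rfl | hj1
    · have hz : ((1:ℕ):ZMod n)*3^(k+1) + ((0:ℕ):ZMod n)*3^(k+1)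
          = ((1:ℕ):ZMod n)*3^0 + ((1:ℕ):ZMod n)*3^1 := by push_cast; linear_combination heq
      have h := zmaster hn hm 1 0 1 1 (k+1) (k+1) 0 1 (by norm_num) (by norm_num) (by norm_num)
        (by norm_num) (fun _ => by norm_num) (fun _ => by norm_num) hz
      rw [Nat.zero_mod, hsmall 1 (by omega)] at h
      exact N6 (by omega) h
    · have hz : ((1:ℕ):ZMod n)*3^(k+1) + ((0:ℕ):ZMod n)*3^(k+1)
          = ((2:ℕ):ZMod n)*3^j + ((2:ℕ):ZMod n)*3^0 := by push_cast; linear_combination heq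
      have h := zmaster hn hm 1 0 2 2 (k+1) (k+1) j 0 (by norm_num) (by norm_num) (by norm_num)
        (by norm_num) (fun _ => by norm_num) (by rw [hsmall j hjm, Nat.zero_mod]; omega) hz
      rw [hsmall j hjm, Nat.zero_mod] at h
      exact N7 (by omega) h
    · have hz : ((2:ℕ):ZMod n)*3^(i+k) + ((1:ℕ):ZMod n)*3^k
          = ((1:ℕ):ZMod n)*3^0 + ((1:ℕ):ZMod n)*3^1 := by push_cast; linear_combination heq
      have h := zmaster hn hm 2 1 1 1 (i+k) k 0 1 (by norm_num) (by norm_num) (by norm_num)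
        (by norm_num) (fun hc => absurd hc (hpk i k hi1 hi hk)) (fun _ => by norm_num) hz
      rw [hsmall k hk, Nat.zero_mod, hsmall 1 (by omega)] at h
      exact N4 (by have := hpk i k hi1 hi hk; rwa [hsmall k hk] at this) (by omega) h
    · have hz : ((2:ℕ):ZMod n)*3^(i+k) + ((1:ℕ):ZMod n)*3^k
          = ((2:ℕ):ZMod n)*3^j + ((2:ℕ):ZMod n)*3^0 := by push_cast; linear_combination heq
      have h := zmaster hn hm 2 1 2 2 (i+k) k j 0 (by norm_num) (by norm_num) (by norm_num)
        (by norm_num) (fun hc => absurd hc (hpk i k hi1 hi hk))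
        (by rw [hsmall j hjm, Nat.zero_mod]; omega) hz
      rw [hsmall k hk, hsmall j hjm, Nat.zero_mod] at h
      exact N3 (by have := hpk i k hi1 hi hk; rwa [hsmall k hk] at this) (by omega) h
  have hBC : ∀ i j k, i < m → j < (m+1)/2 → k < m → fC j = fB i * 3^k → False := by
    intro i j k hi hj hk heq
    rw [hfC, hfB] at heq
    have hjm : j < m := by omega
    rcases Nat.eq_zero_or_pos i with rfl | hi1 <;> rcases Nat.eq_zero_or_pos j with rfl | hj1
    · have hz : ((1:ℕ):ZMod n)*3^(k+1) + ((0:ℕ):ZMod n)*3^(k+1)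
          = ((2:ℕ):ZMod n)*3^0 + ((0:ℕ):ZMod n)*3^0 := by push_cast; linear_combination heq
      have h := zmaster hn hm 1 0 2 0 (k+1) (k+1) 0 0 (by norm_num) (by norm_num) (by norm_num)
        (by norm_num) (fun _ => by norm_num) (fun _ => by norm_num) hz
      exact N8 h
    · have hz : ((1:ℕ):ZMod n)*3^(k+1) + ((0:ℕ):ZMod n)*3^(k+1)
          = ((1:ℕ):ZMod n)*3^j + ((1:ℕ):ZMod n)*3^0 := by push_cast; linear_combination heq
      have h := zmaster hn hm 1 0 1 1 (k+1) (k+1) j 0 (by norm_num) (by norm_num) (by norm_num)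
        (by norm_num) (fun _ => by norm_num) (fun _ => by norm_num) hz
      rw [hsmall j hjm, Nat.zero_mod] at h
      exact N6 (by omega) h
    · have hz : ((2:ℕ):ZMod n)*3^(i+k) + ((1:ℕ):ZMod n)*3^k
          = ((2:ℕ):ZMod n)*3^0 + ((0:ℕ):ZMod n)*3^0 := by push_cast; linear_combination heq
      have h := zmaster hn hm 2 1 2 0 (i+k) k 0 0 (by norm_num) (by norm_num) (by norm_num)
        (by norm_num) (fun hc => absurd hc (hpk i k hi1 hi hk)) (fun _ => by norm_num) hz
      rw [hsmall k hk] at h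
      exact N5 (by have := hpk i k hi1 hi hk; rwa [hsmall k hk] at this) h
    · have hz : ((2:ℕ):ZMod n)*3^(i+k) + ((1:ℕ):ZMod n)*3^k
          = ((1:ℕ):ZMod n)*3^j + ((1:ℕ):ZMod n)*3^0 := by push_cast; linear_combination heq
      have h := zmaster hn hm 2 1 1 1 (i+k) k j 0 (by norm_num) (by norm_num) (by norm_num)
        (by norm_num) (fun hc => absurd hc (hpk i k hi1 hi hk)) (fun _ => by norm_num) hz
      rw [hsmall k hk, hsmall j hjm, Nat.zero_mod] at h
      exact N4 (by have := hpk i k hi1 hi hk; rwa [hsmall k hk] at this) (by omega) h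
  have hAA : ∀ i j k, i < (m+1)/2 → j < (m+1)/2 → k < m → fA j = fA i * 3^k → i = j := by
    intro i j k hi hj hk heq
    rw [hfA, hfA] at heq
    have him : i < m := by omega
    have hjm : j < m := by omega
    rcases Nat.eq_zero_or_pos i with rfl | hi1 <;> rcases Nat.eq_zero_or_pos j with rfl | hj1
    · rfl
    · exfalso
      have hz : ((1:ℕ):ZMod n)*3^(k+1) + ((1:ℕ):ZMod n)*3^k
          = ((2:ℕ):ZMod n)*3^j + ((2:ℕ):ZMod n)*3^0 := by push_cast; linear_combination heq
      have h := zmaster hn hm 1 1 2 2 (k+1) k j 0 (by norm_num) (by norm_num) (by norm_num)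
        (by norm_num) (fun _ => by norm_num) (by rw [hsmall j hjm, Nat.zero_mod]; omega) hz
      rw [hsmall k hk, hsmall j hjm, Nat.zero_mod] at h
      exact N10 (by have := hp1 k hk; rwa [hsmall k hk] at this) (by omega) h
    · exfalso
      have hz : ((2:ℕ):ZMod n)*3^(i+k) + ((2:ℕ):ZMod n)*3^k
          = ((1:ℕ):ZMod n)*3^0 + ((1:ℕ):ZMod n)*3^1 := by push_cast; linear_combination heq
      have h := zmaster hn hm 2 2 1 1 (i+k) k 0 1 (by norm_num) (by norm_num) (by norm_num)
        (by norm_num) (fun hc => absurd hc (hpk i k hi1 him hk)) (fun _ => by norm_num) hz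
      rw [hsmall k hk, Nat.zero_mod, hsmall 1 (by omega)] at h
      exact N10 (by omega) (by have := hpk i k hi1 him hk; rwa [hsmall k hk] at this) h.symm
    · have hz : ((2:ℕ):ZMod n)*3^(i+k) + ((2:ℕ):ZMod n)*3^k
          = ((2:ℕ):ZMod n)*3^j + ((2:ℕ):ZMod n)*3^0 := by push_cast; linear_combination heq
      have h := zmaster hn hm 2 2 2 2 (i+k) k j 0 (by norm_num) (by norm_num) (by norm_num)
        (by norm_num) (fun hc => absurd hc (hpk i k hi1 him hk))
        (by rw [hsmall j hjm, Nat.zero_mod]; omega) hz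
      rw [hsmall k hk, hsmall j hjm, Nat.zero_mod] at h
      rcases N9 (by have := hpk i k hi1 him hk; rwa [hsmall k hk] at this) (by omega) h with
        ⟨h1, h2⟩ | ⟨h1, h2⟩ <;>
        rcases hdich (i+k) (by omega) with h' | ⟨h', h''⟩ <;> rw [h'] at h1 <;> omega
  have hCC : ∀ i j k, i < (m+1)/2 → j < (m+1)/2 → k < m → fC j = fC i * 3^k → i = j := by
    intro i j k hi hj hk heq
    rw [hfC, hfC] at heq
    have him : i < m := by omega
    have hjm : j < m := by omega
    rcases Nat.eq_zero_or_pos i with rfl | hi1 <;> rcases Nat.eq_zero_or_pos j with rfl | hj1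
    · rfl
    · exfalso
      have hz : ((2:ℕ):ZMod n)*3^k + ((0:ℕ):ZMod n)*3^k
          = ((1:ℕ):ZMod n)*3^j + ((1:ℕ):ZMod n)*3^0 := by push_cast; linear_combination heq
      have h := zmaster hn hm 2 0 1 1 k k j 0 (by norm_num) (by norm_num) (by norm_num)
        (by norm_num) (fun _ => by norm_num) (fun _ => by norm_num) hz
      rw [hsmall k hk, hsmall j hjm, Nat.zero_mod] at h
      exact N13 (by omega) h.symm
    · exfalso
      have hz : ((1:ℕ):ZMod n)*3^(i+k) + ((1:ℕ):ZMod n)*3^k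
          = ((2:ℕ):ZMod n)*3^0 + ((0:ℕ):ZMod n)*3^0 := by push_cast; linear_combination heq
      have h := zmaster hn hm 1 1 2 0 (i+k) k 0 0 (by norm_num) (by norm_num) (by norm_num)
        (by norm_num) (fun _ => by norm_num) (fun _ => by norm_num) hz
      rw [hsmall k hk] at h
      exact N13 (by have := hpk i k hi1 him hk; rwa [hsmall k hk] at this) h
    · have hz : ((1:ℕ):ZMod n)*3^(i+k) + ((1:ℕ):ZMod n)*3^k
          = ((1:ℕ):ZMod n)*3^j + ((1:ℕ):ZMod n)*3^0 := by push_cast; linear_combination heq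
      have h := zmaster hn hm 1 1 1 1 (i+k) k j 0 (by norm_num) (by norm_num) (by norm_num)
        (by norm_num) (fun _ => by norm_num) (fun _ => by norm_num) hz
      rw [hsmall k hk, hsmall j hjm, Nat.zero_mod] at h
      rcases N12 (by have := hpk i k hi1 him hk; rwa [hsmall k hk] at this) (by omega) h with
        ⟨h1, h2⟩ | ⟨h1, h2⟩ <;>
        rcases hdich (i+k) (by omega) with h' | ⟨h', h''⟩ <;> rw [h'] at h1 <;> omega
  have hAC : ∀ i j k, i < (m+1)/2 → j < (m+1)/2 → k < m → fC j = fA i * 3^k → i = 0 ∧ j = 1 := by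
    intro i j k hi hj hk heq
    rw [hfC, hfA] at heq
    have him : i < m := by omega
    have hjm : j < m := by omega
    rcases Nat.eq_zero_or_pos i with rfl | hi1 <;> rcases Nat.eq_zero_or_pos j with rfl | hj1
    · exfalso
      have hz : ((1:ℕ):ZMod n)*3^(k+1) + ((1:ℕ):ZMod n)*3^k
          = ((2:ℕ):ZMod n)*3^0 + ((0:ℕ):ZMod n)*3^0 := by push_cast; linear_combination heq
      have h := zmaster hn hm 1 1 2 0 (k+1) k 0 0 (by norm_num) (by norm_num) (by norm_num)
        (by norm_num) (fun _ => by norm_num) (fun _ => by norm_num) hz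
      rw [hsmall k hk] at h
      exact N13 (by have := hp1 k hk; rwa [hsmall k hk] at this) h
    · have hz : ((1:ℕ):ZMod n)*3^(k+1) + ((1:ℕ):ZMod n)*3^k
          = ((1:ℕ):ZMod n)*3^j + ((1:ℕ):ZMod n)*3^0 := by push_cast; linear_combination heq
      have h := zmaster hn hm 1 1 1 1 (k+1) k j 0 (by norm_num) (by norm_num) (by norm_num)
        (by norm_num) (fun _ => by norm_num) (fun _ => by norm_num) hz
      rw [hsmall k hk, hsmall j hjm, Nat.zero_mod] at h
      refine ⟨rfl, ?_⟩
      rcases N12 (by have := hp1 k hk; rwa [hsmall k hk] at this) (by omega) h with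
        ⟨h1, h2⟩ | ⟨h1, h2⟩ <;>
        rcases hdich (k+1) (by omega) with h' | ⟨h', h''⟩ <;> rw [h'] at h1 <;> omega
    · exfalso
      have hz : ((2:ℕ):ZMod n)*3^(i+k) + ((2:ℕ):ZMod n)*3^k
          = ((2:ℕ):ZMod n)*3^0 + ((0:ℕ):ZMod n)*3^0 := by push_cast; linear_combination heq
      have h := zmaster hn hm 2 2 2 0 (i+k) k 0 0 (by norm_num) (by norm_num) (by norm_num)
        (by norm_num) (fun hc => absurd hc (hpk i k hi1 him hk)) (fun _ => by norm_num) hz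
      rw [hsmall k hk] at h
      exact N11 (by have := hpk i k hi1 him hk; rwa [hsmall k hk] at this) h
    · exfalso
      have hz : ((2:ℕ):ZMod n)*3^(i+k) + ((2:ℕ):ZMod n)*3^k
          = ((1:ℕ):ZMod n)*3^j + ((1:ℕ):ZMod n)*3^0 := by push_cast; linear_combination heq
      have h := zmaster hn hm 2 2 1 1 (i+k) k j 0 (by norm_num) (by norm_num) (by norm_num)
        (by norm_num) (fun hc => absurd hc (hpk i k hi1 him hk)) (fun _ => by norm_num) hz
      rw [hsmall k hk, hsmall j hjm, Nat.zero_mod] at h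
      exact N10 (by omega) (by have := hpk i k hi1 him hk; rwa [hsmall k hk] at this) h.symm
  -- within-coset injectivity
  have hIB : ∀ i k k', i < m → k < m → k' < m → fB i * 3^k = fB i * 3^k' → k = k' := by
    intro i k k' hi hk hk' heq
    rw [hfB] at heq
    rcases Nat.eq_zero_or_pos i with rfl | hi1
    · have hz : ((1:ℕ):ZMod n)*3^(k+1) + ((0:ℕ):ZMod n)*3^(k+1)
          = ((1:ℕ):ZMod n)*3^(k'+1) + ((0:ℕ):ZMod n)*3^(k'+1) := by
        push_cast; linear_combination -heq
      have h := zmaster hn hm 1 0 1 0 (k+1) (k+1) (k'+1) (k'+1) (by norm_num) (by norm_num)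
        (by norm_num) (by norm_num) (fun _ => by norm_num) (fun _ => by norm_num) hz
      have h14 := N14 h
      rcases hdich (k+1) (by omega) with h' | ⟨h', h''⟩ <;>
        rcases hdich (k'+1) (by omega) with g' | ⟨g', g''⟩ <;> rw [h', g'] at h14 <;> omega
    · have hz : ((2:ℕ):ZMod n)*3^(i+k) + ((1:ℕ):ZMod n)*3^k
          = ((2:ℕ):ZMod n)*3^(i+k') + ((1:ℕ):ZMod n)*3^k' := by
        push_cast; linear_combination -heq
      have h := zmaster hn hm 2 1 2 1 (i+k) k (i+k') k' (by norm_num) (by norm_num)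
        (by norm_num) (by norm_num) (fun hc => absurd hc (hpk i k hi1 hi hk))
        (fun hc => absurd hc (hpk i k' hi1 hi hk')) hz
      rw [hsmall k hk, hsmall k' hk'] at h
      obtain ⟨h1, h2⟩ := N1 (by have := hpk i k hi1 hi hk; rwa [hsmall k hk] at this)
        (by have := hpk i k' hi1 hi hk'; rwa [hsmall k' hk'] at this) h
      exact h2
  have hIA : ∀ i k k', i < (m+1)/2 → k < m → k' < m → fA i * 3^k = fA i * 3^k' → k = k' := by
    intro i k k' hi hk hk' heq
    rw [hfA] at heq
    have him : i < m := by omega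
    rcases Nat.eq_zero_or_pos i with rfl | hi1
    · have hz : ((1:ℕ):ZMod n)*3^(k+1) + ((1:ℕ):ZMod n)*3^k
          = ((1:ℕ):ZMod n)*3^(k'+1) + ((1:ℕ):ZMod n)*3^k' := by
        push_cast; linear_combination -heq
      have h := zmaster hn hm 1 1 1 1 (k+1) k (k'+1) k' (by norm_num) (by norm_num)
        (by norm_num) (by norm_num) (fun _ => by norm_num) (fun _ => by norm_num) hz
      rw [hsmall k hk, hsmall k' hk'] at h
      rcases N12 (by have := hp1 k hk; rwa [hsmall k hk] at this)
        (by have := hp1 k' hk'; rwa [hsmall k' hk'] at this) h with ⟨h1, h2⟩ | ⟨h1, h2⟩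
      · exact h2
      · exfalso
        rcases hdich (k+1) (by omega) with h' | ⟨h', h''⟩ <;>
          rcases hdich (k'+1) (by omega) with g' | ⟨g', g''⟩ <;>
          rw [h'] at h1 <;> rw [g'] at h2 <;> omega
    · have hz : ((2:ℕ):ZMod n)*3^(i+k) + ((2:ℕ):ZMod n)*3^k
          = ((2:ℕ):ZMod n)*3^(i+k') + ((2:ℕ):ZMod n)*3^k' := by
        push_cast; linear_combination -heq
      have h := zmaster hn hm 2 2 2 2 (i+k) k (i+k') k' (by norm_num) (by norm_num)
        (by norm_num) (by norm_num) (fun hc => absurd hc (hpk i k hi1 him hk))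
        (fun hc => absurd hc (hpk i k' hi1 him hk')) hz
      rw [hsmall k hk, hsmall k' hk'] at h
      rcases N9 (by have := hpk i k hi1 him hk; rwa [hsmall k hk] at this)
        (by have := hpk i k' hi1 him hk'; rwa [hsmall k' hk'] at this) h with
        ⟨h1, h2⟩ | ⟨h1, h2⟩
      · exact h2
      · exfalso
        rcases hdich (i+k) (by omega) with h' | ⟨h', h''⟩ <;>
          rcases hdich (i+k') (by omega) with g' | ⟨g', g''⟩ <;>
          rw [h'] at h1 <;> rw [g'] at h2 <;> omega
  have hIC : ∀ i k k', i < (m+1)/2 → k < m → k' < m → fC i * 3^k = fC i * 3^k' → k = k' := by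
    intro i k k' hi hk hk' heq
    rw [hfC] at heq
    have him : i < m := by omega
    rcases Nat.eq_zero_or_pos i with rfl | hi1
    · have hz : ((2:ℕ):ZMod n)*3^k + ((0:ℕ):ZMod n)*3^k
          = ((2:ℕ):ZMod n)*3^k' + ((0:ℕ):ZMod n)*3^k' := by
        push_cast; linear_combination -heq
      have h := zmaster hn hm 2 0 2 0 k k k' k' (by norm_num) (by norm_num)
        (by norm_num) (by norm_num) (fun _ => by norm_num) (fun _ => by norm_num) hz
      rw [hsmall k hk, hsmall k' hk'] at h
      exact N15 h
    · have hz : ((1:ℕ):ZMod n)*3^(i+k) + ((1:ℕ):ZMod n)*3^k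
          = ((1:ℕ):ZMod n)*3^(i+k') + ((1:ℕ):ZMod n)*3^k' := by
        push_cast; linear_combination -heq
      have h := zmaster hn hm 1 1 1 1 (i+k) k (i+k') k' (by norm_num) (by norm_num)
        (by norm_num) (by norm_num) (fun _ => by norm_num) (fun _ => by norm_num) hz
      rw [hsmall k hk, hsmall k' hk'] at h
      rcases N12 (by have := hpk i k hi1 him hk; rwa [hsmall k hk] at this)
        (by have := hpk i k' hi1 him hk'; rwa [hsmall k' hk'] at this) h with
        ⟨h1, h2⟩ | ⟨h1, h2⟩
      · exact h2
      · exfalso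
        rcases hdich (i+k) (by omega) with h' | ⟨h', h''⟩ <;>
          rcases hdich (i+k') (by omega) with g' | ⟨g', g''⟩ <;>
          rw [h'] at h1 <;> rw [g'] at h2 <;> omega
  -- ===== coset sizes =====
  have hcard : ∀ x ∈ (Finset.range ((m + 1) / 2)).image fA ∪ (Finset.range m).image fB ∪
      (Finset.range ((m + 1) / 2)).image fC, (S x).card = m := by
    have hgen : ∀ (x : ZMod n), (∀ k k', k < m → k' < m → x*3^k = x*3^k' → k = k') →
        (S x).card = m := by
      intro x hinj
      rw [hS, Finset.card_image_of_injOn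
        (fun a ha b hb hab => hinj a b (by simpa using ha) (by simpa using hb) hab),
        Finset.card_range]
    intro x hx
    simp only [Finset.mem_union, Finset.mem_image, Finset.mem_range] at hx
    rcases hx with (⟨i, hi, rfl⟩ | ⟨i, hi, rfl⟩) | ⟨i, hi, rfl⟩
    · exact hgen _ (fun k k' hk hk' h => hIA i k k' hi hk hk' h)
    · exact hgen _ (fun k k' hk hk' h => hIB i k k' hi hk hk' h)
    · exact hgen _ (fun k k' hk hk' h => hIC i k k' hi hk hk' h)
  -- ===== pairwise disjointness over the union =====
  have hpair : ∀ x ∈ (Finset.range ((m + 1) / 2)).image fA ∪ (Finset.range m).image fB ∪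
      (Finset.range ((m + 1) / 2)).image fC,
      ∀ y ∈ (Finset.range ((m + 1) / 2)).image fA ∪ (Finset.range m).image fB ∪
      (Finset.range ((m + 1) / 2)).image fC, x ≠ y → Disjoint (S x) (S y) := by
    intro x hx y hy hxy
    by_contra hnd
    have hnd' : ¬ Disjoint (S y) (S x) := fun h => hnd h.symm
    simp only [Finset.mem_union, Finset.mem_image, Finset.mem_range] at hx hy
    rcases hx with (⟨i, hi, rfl⟩ | ⟨i, hi, rfl⟩) | ⟨i, hi, rfl⟩ <;>
      rcases hy with (⟨j, hj, rfl⟩ | ⟨j, hj, rfl⟩) | ⟨j, hj, rfl⟩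
    · obtain ⟨k, hk, heq⟩ := hrel _ _ hnd
      exact hxy (congrArg fA (hAA i j k hi hj hk heq))
    · obtain ⟨k, hk, heq⟩ := hrel _ _ hnd'
      exact hBA j i k hj hi hk heq
    · obtain ⟨k, hk, heq⟩ := hrel _ _ hnd
      obtain ⟨h1, h2⟩ := hAC i j k hi hj hk heq
      exact hxy (by rw [h1, h2]; exact hA0C1)
    · obtain ⟨k, hk, heq⟩ := hrel _ _ hnd
      exact hBA i j k hi hj hk heq
    · obtain ⟨k, hk, heq⟩ := hrel _ _ hnd
      exact hxy (congrArg fB (hBB i j k hi hj hk heq))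
    · obtain ⟨k, hk, heq⟩ := hrel _ _ hnd
      exact hBC i j k hi hj hk heq
    · obtain ⟨k, hk, heq⟩ := hrel _ _ hnd'
      obtain ⟨h1, h2⟩ := hAC j i k hj hi hk heq
      exact hxy (by rw [h1, h2]; exact hA0C1.symm)
    · obtain ⟨k, hk, heq⟩ := hrel _ _ hnd'
      exact hBC j i k hj hi hk heq
    · obtain ⟨k, hk, heq⟩ := hrel _ _ hnd
      exact hxy (congrArg fC (hCC i j k hi hj hk heq))
  -- ===== cardinalities of the index sets =====
  have hAcard : ((Finset.range ((m + 1) / 2)).image fA).card = (m+1)/2 := by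
    rw [Finset.card_image_of_injOn, Finset.card_range]
    intro a ha b hb hab
    simp only [Finset.coe_range, Set.mem_Iio] at ha hb
    exact hAA a b 0 ha hb (by omega) (by rw [pow_zero, mul_one]; exact hab.symm)
  have hBcard : ((Finset.range m).image fB).card = m := by
    rw [Finset.card_image_of_injOn, Finset.card_range]
    intro a ha b hb hab
    simp only [Finset.coe_range, Set.mem_Iio] at ha hb
    exact hBB a b 0 ha hb (by omega) (by rw [pow_zero, mul_one]; exact hab.symm)
  have hCcard : ((Finset.range ((m + 1) / 2)).image fC).card = (m+1)/2 := by
    rw [Finset.card_image_of_injOn, Finset.card_range]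
    intro a ha b hb hab
    simp only [Finset.coe_range, Set.mem_Iio] at ha hb
    exact hCC a b 0 ha hb (by omega) (by rw [pow_zero, mul_one]; exact hab.symm)
  have hdBA : Disjoint ((Finset.range m).image fB) ((Finset.range ((m + 1) / 2)).image fA) := by
    rw [Finset.disjoint_left]
    rintro x hxB hxA
    simp only [Finset.mem_image, Finset.mem_range] at hxB hxA
    obtain ⟨i, hi, rfl⟩ := hxB
    obtain ⟨j, hj, hEq⟩ := hxA
    exact hBA i j 0 hi hj (by omega) (by rw [pow_zero, mul_one]; exact hEq)
  have hdBC : Disjoint ((Finset.range m).image fB) ((Finset.range ((m + 1) / 2)).image fC) := by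
    rw [Finset.disjoint_left]
    rintro x hxB hxC
    simp only [Finset.mem_image, Finset.mem_range] at hxB hxC
    obtain ⟨i, hi, rfl⟩ := hxB
    obtain ⟨j, hj, hEq⟩ := hxC
    exact hBC i j 0 hi hj (by omega) (by rw [pow_zero, mul_one]; exact hEq)
  have hACinter : ((Finset.range ((m + 1) / 2)).image fA) ∩ ((Finset.range ((m + 1) / 2)).image fC)
      = {fA 0} := by
    ext x
    simp only [Finset.mem_inter, Finset.mem_image, Finset.mem_range, Finset.mem_singleton]
    constructor
    · rintro ⟨⟨i, hi, rfl⟩, ⟨j, hj, hEq⟩⟩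
      obtain ⟨h1, h2⟩ := hAC i j 0 hi hj (by omega) (by rw [pow_zero, mul_one]; exact hEq)
      rw [h1]
    · rintro rfl
      exact ⟨⟨0, by omega, rfl⟩, ⟨1, by omega, hA0C1.symm⟩⟩
  have hTre : (Finset.range ((m + 1) / 2)).image fA ∪ (Finset.range m).image fB ∪
      (Finset.range ((m + 1) / 2)).image fC = (Finset.range m).image fB ∪
      ((Finset.range ((m + 1) / 2)).image fA ∪ (Finset.range ((m + 1) / 2)).image fC) := by
    ext x; simp only [Finset.mem_union]; tauto
  have hTcard : ((Finset.range ((m + 1) / 2)).image fA ∪ (Finset.range m).image fB ∪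
      (Finset.range ((m + 1) / 2)).image fC).card = 2 * m := by
    rw [hTre, Finset.card_union_of_disjoint (by
      rw [Finset.disjoint_union_right]; exact ⟨hdBA, hdBC⟩)]
    have h2 := Finset.card_union_add_card_inter ((Finset.range ((m + 1) / 2)).image fA)
      ((Finset.range ((m + 1) / 2)).image fC)
    rw [hACinter, Finset.card_singleton, hAcard, hCcard] at h2
    rw [hBcard]
    omega
  -- ===== final assembly =====
  refine ⟨?_, hcard, ?_, ?_, ?_, ?_, ?_⟩
  · rw [Finset.card_biUnion hpair, Finset.sum_congr rfl hcard, Finset.sum_const, smul_eq_mul,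
      hTcard]
    ring
  · intro i hi j hj hij
    rw [Finset.mem_range] at hi hj
    by_contra hnd
    obtain ⟨k, hk, heq⟩ := hrel _ _ hnd
    exact hij (hBB i j k hi hj hk heq)
  · intro i hi j hj
    rw [Finset.mem_range] at hi hj
    constructor
    · by_contra hnd
      obtain ⟨k, hk, heq⟩ := hrel _ _ hnd
      exact hBA i j k hi hj hk heq
    · by_contra hnd
      obtain ⟨k, hk, heq⟩ := hrel _ _ hnd
      exact hBC i j k hi hj hk heq
  · intro i hi j hj hij
    rw [Finset.mem_range] at hi hj
    constructor
    · by_contra hnd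
      obtain ⟨k, hk, heq⟩ := hrel _ _ hnd
      exact hij (hAA i j k hi hj hk heq)
    · by_contra hnd
      obtain ⟨k, hk, heq⟩ := hrel _ _ hnd
      exact hij (hCC i j k hi hj hk heq)
  · intro i hi j hj hnd
    exact (hSeq' _ _ (hrel _ _ hnd)).symm
  · refine ⟨(⟨0, by omega⟩, ⟨1, by omega⟩), ?_, ?_⟩
    · exact congrArg S hA0C1
    · rintro ⟨a, b⟩ hab'
      have hab'' : S (fA (a : ℕ)) = S (fC (b : ℕ)) := hab'
      have hnd : ¬ Disjoint (S (fA (a : ℕ))) (S (fC (b : ℕ))) := by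
        rw [hab'']
        intro hd
        obtain ⟨t, ht⟩ := hSne (fC (b : ℕ))
        exact Finset.disjoint_left.mp hd ht ht
      obtain ⟨k, hk, heq⟩ := hrel _ _ hnd
      obtain ⟨h1, h2⟩ := hAC _ _ k a.isLt b.isLt hk heq
      exact Prod.ext (Fin.ext h1) (Fin.ext h2)
end

section
/- Let m ≥ 5 be odd and q = 3^m. The ternary code C₃(D_d(C(m,3))) spanned over GF(3) by the incidence vectors of the supports of the minimum-weight codewords of C(m,3) equals the GF(3)-linear span of the set of functions {Tr(a x²)Tr(b x²), Tr(a x²)Tr(b x), Tr(a x)Tr(b x), Tr(b x), 1 : a, b ∈ GF(q)}, viewed as vectors in GF(3)^q indexed by x ∈ GF(q). -/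
/-!
Write `Q_a = Tr(ax²)` and `L_b = Tr(bx)`. Over `GF(3)` the incidence vector of the support of `c`
is `c²`, so the design code is spanned by squares `(Q_a + L_b + h)²`; expanding them lands in the
span of the products, since `Q_a` is itself a combination of products `L_c L_d` (dual basis of the
trace form).

Conversely, for odd `m` and `a ≠ 0` the quadratic Gauss sum `S = ∑ ζ^{Q_a(x)}` satisfies
`S² = -3^m`; writing `S = N₀ + N₁ζ + N₂ζ²` in terms of the value counts of `Q_a` forces them to be
`3^{m-1}` and `3^{m-1} ± 3^{(m-1)/2}`. Hence, if `w` is the most frequent value of `Q_a`, every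
translate `Q_a(x - t) - w = Q_a + L_b + Tr(b²/a) - w` (with `b = at`) has minimum weight. Sums and
differences of the squares of these codewords for `±b` and for suitable `a`, `b`, read with
`4 = 1`, give `L_b²`, `(Q_a + k)²` and `(Q_a + k) L_b`; from these come `Q_a`, `1`, `L_b`, and by
polarization all the products.
-/

open Finset

theorem ZMod.sum_univ_three {M : Type*} [AddCommMonoid M] (f : ZMod 3 → M) :
    ∑ u, f u = f 0 + f 1 + f 2 :=
  Fin.sum_univ_three f

theorem ZMod.sq_eq_ite_ne_zero_three (t : ZMod 3) : t ^ 2 = if t ≠ 0 then 1 else 0 := by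
  revert t; decide

theorem Pi.three_eq_zero {X : Type*} : (3 : X → ZMod 3) = 0 := by
  funext x; rfl

theorem mul_sq_add_mul_add_sq_div_eq {F : Type*} [Field F] [CharP F 3] {a : F} (ha : a ≠ 0)
    (b x : F) : a * x ^ 2 + b * x + b ^ 2 / a = a * (x - b / a) ^ 2 := by
  field_simp
  linear_combination a * x * b * (CharP.cast_eq_zero F 3)

theorem Fintype.card_filter_sub_eq {G : Type*} [AddGroup G] [Fintype G] (P : G → Prop)
    [DecidablePred P] (t : G) : #{x | P (x - t)} = #{x | P x} :=
  Finset.card_equiv (Equiv.subRight t) (by simp)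

theorem Fintype.card_fibers_zmod_three {X : Type*} [Fintype X]
    (f : X → ZMod 3) : #{x | f x = 0} + #{x | f x = 1} + #{x | f x = 2} = Fintype.card X := by
  rw [← card_univ, card_eq_sum_card_fiberwise (f := f) (s := univ) (t := univ)
    (fun _ _ => mem_univ _), ZMod.sum_univ_three]

theorem Submodule.mul_mem_of_sq_mem {K A : Type*} [Field K] [CommRing A] [Algebra K A]
    (h2 : (2 : K) ≠ 0) {V : Submodule K A} {f g : A} (hf : f ^ 2 ∈ V) (hg : g ^ 2 ∈ V)
    (hfg : (f + g) ^ 2 ∈ V) : f * g ∈ V := by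
  have hpolar : (f + g) ^ 2 - f ^ 2 - g ^ 2 = (2 : K) • (f * g) := by
    rw [two_smul]; ring
  have := V.smul_mem (2 : K)⁻¹ (V.sub_mem (V.sub_mem hfg hf) hg)
  rwa [hpolar, inv_smul_smul₀ h2] at this

theorem Algebra.trace_mul_sq_mem_span {K L : Type*} [Field K] [Field L] [Algebra K L]
    [FiniteDimensional K L] [Algebra.IsSeparable K L] (a : L) :
    (fun x => trace K L (a * x ^ 2)) ∈ Submodule.span K
      {f : L → K | ∃ c d : L, f = fun x => trace K L (c * x) * trace K L (d * x)} := by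
  let b := Module.finBasis K L
  let b' := (traceForm K L).dualBasis (traceForm_nondegenerate K L) b
  have hexpand (x : L) : x = ∑ i, trace K L (b i * x) • b' i := by
    conv_lhs => rw [← b'.sum_repr x]
    simp [b', LinearMap.BilinForm.dualBasis_repr_apply, mul_comm]
  have hsq (x : L) : a * x ^ 2 =
      ∑ i, ∑ j, (trace K L (b i * x) * trace K L (b j * x)) • (a * (b' i * b' j)) := by
    conv_lhs => rw [sq, hexpand x, sum_mul_sum]
    simp_rw [mul_sum, smul_mul_smul_comm, mul_smul_comm]
  have hfun : (fun x => trace K L (a * x ^ 2)) = ∑ i, ∑ j, trace K L (a * (b' i * b' j)) •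
      fun x => trace K L (b i * x) * trace K L (b j * x) := by
    funext x
    simp only [hsq, map_sum, map_smul, Finset.sum_apply, Pi.smul_apply, smul_eq_mul, mul_comm]
  rw [hfun]
  exact Submodule.sum_mem _ fun i _ => Submodule.sum_mem _ fun j _ =>
    Submodule.smul_mem _ _ (Submodule.subset_span ⟨b i, b j, rfl⟩)

section QuadraticGaussSum

variable {F R : Type*} [Field F] [Fintype F] [DecidableEq F] [CommRing R] [IsDomain R]

theorem sum_addChar_sq_eq_gaussSum (hF : ringChar F ≠ 2) {ψ : AddChar F R} (hψ : ψ ≠ 1) :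
    ∑ x, ψ (x ^ 2) = gaussSum ((quadraticChar F).ringHomComp (Int.castRingHom R)) ψ := by
  have hfiber (s : F) : (#{x | x ^ 2 = s} : R) = quadraticChar F s + 1 := by
    have h := congrArg (Int.cast : ℤ → R) (quadraticChar_card_sqrts hF s)
    push_cast at h
    simpa [Set.toFinset_ofPred] using h
  rw [← Finset.sum_fiberwise' univ (fun x : F => x ^ 2)]
  simp_rw [sum_const, nsmul_eq_mul, hfiber, add_mul, sum_add_distrib, one_mul,
    AddChar.sum_eq_zero_of_ne_one hψ, add_zero]
  rfl

theorem sq_sum_addChar_mul_sq [CharZero R] (hF : ringChar F ≠ 2) {ψ : AddChar F R} (hψ : ψ ≠ 1)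
    {a : F} (ha : a ≠ 0) :
    (∑ x, ψ (a * x ^ 2)) ^ 2 = quadraticChar F (-1) * Fintype.card F := by
  have hψa : ψ.mulShift a ≠ 1 := AddChar.IsPrimitive.of_ne_one hψ ha
  have hχ : (quadraticChar F).ringHomComp (Int.castRingHom R) ≠ 1 := by
    obtain ⟨c, hc⟩ := quadraticChar_exists_neg_one' hF
    intro h
    have := congrArg (fun χ : MulChar F R => χ c) h
    norm_num [hc] at this
  have hsum := sum_addChar_sq_eq_gaussSum hF hψa
  simp only [AddChar.mulShift_apply] at hsum
  rw [hsum, gaussSum_sq hχ ((quadraticChar_isQuadratic F).comp _)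
    (AddChar.IsPrimitive.of_ne_one hψa)]
  simp

end QuadraticGaussSum

section CubeRootOfUnity

variable {R : Type*} [CommRing R] {ζ : R}

theorem sum_zmodChar_eq (hζ : ζ ^ 3 = 1) {X : Type*} [Fintype X] (f : X → ZMod 3) :
    ∑ x, AddChar.zmodChar 3 hζ (f x) =
      #{x | f x = 0} + #{x | f x = 1} * ζ + #{x | f x = 2} * ζ ^ 2 := by
  rw [← Finset.sum_fiberwise' univ f]
  simp_rw [sum_const, nsmul_eq_mul]
  rw [ZMod.sum_univ_three, AddChar.zmodChar_apply, AddChar.zmodChar_apply,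
    AddChar.zmodChar_apply, show ZMod.val (1 : ZMod 3) = 1 from rfl,
    show ZMod.val (2 : ZMod 3) = 2 from rfl]
  simp

variable [CharZero R]

theorem eq_zero_of_intCast_add_mul_eq_zero (hζ : ζ ^ 2 + ζ + 1 = 0) {x y : ℤ}
    (h : (x : R) + y * ζ = 0) : x = 0 ∧ y = 0 := by
  -- `(2ζ + 1)² = -3`, and `-3` is not the square of a rational
  have hsq : (((y - 2 * x) ^ 2 : ℤ) : R) = ((-3 * y ^ 2 : ℤ) : R) := by
    push_cast
    linear_combination (-2 * (y - 2 * x + y * (2 * ζ + 1))) * h + 4 * y ^ 2 * hζ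
  have hsq' := Int.cast_injective hsq
  obtain rfl : y = 0 := by nlinarith [sq_nonneg (y - 2 * x), sq_nonneg y]
  exact ⟨by nlinarith, rfl⟩

theorem eq_of_sq_eq_neg_three_mul_sq (hζ : ζ ^ 2 + ζ + 1 = 0) {N₀ N₁ N₂ s : ℕ}
    (hsum : N₀ + N₁ + N₂ = 3 * s ^ 2)
    (hsq : ((N₀ : R) + N₁ * ζ + N₂ * ζ ^ 2) ^ 2 = -(3 * s ^ 2)) :
    N₀ = s ^ 2 ∧ (N₁ = s ^ 2 + s ∧ N₂ + s = s ^ 2 ∨ N₁ + s = s ^ 2 ∧ N₂ = s ^ 2 + s) := by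
  set A : ℤ := N₀ - N₂ with hA
  set B : ℤ := N₁ - N₂ with hB
  obtain ⟨hre, him⟩ := eq_zero_of_intCast_add_mul_eq_zero hζ
    (x := A ^ 2 - B ^ 2 + 3 * s ^ 2) (y := 2 * A * B - B ^ 2) (by
      push_cast [A, B]
      linear_combination hsq - (N₂ * ((N₀ + N₁ * ζ + N₂ * ζ ^ 2) + ((N₀ - N₂) + (N₁ - N₂) * ζ))
        + (N₁ - N₂ : R) ^ 2) * hζ)
  zify at hsum ⊢
  rcases mul_eq_zero.1 (show B * (2 * A - B) = 0 by linear_combination him) with hB0 | hBA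
  · have hs : (s : ℤ) = 0 := by nlinarith [sq_nonneg A, sq_nonneg (s : ℤ)]
    rw [hs] at hsum ⊢
    exact ⟨by linarith, Or.inl ⟨by linarith, by linarith⟩⟩
  · have h3 : 3 * ((A - s) * (A + s)) = 0 := by linear_combination -hre + (2 * A + B) * hBA
    rcases mul_eq_zero.1 ((mul_eq_zero.1 h3).resolve_left three_ne_zero) with hAs | hAs
    · exact ⟨by linarith, Or.inl ⟨by linarith, by linarith⟩⟩
    · exact ⟨by linarith, Or.inr ⟨by linarith, by linarith⟩⟩

end CubeRootOfUnity

section TernaryTrace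

variable {F : Type*} [Field F] [Algebra (ZMod 3) F]

theorem charP_three_of_algebra : CharP F 3 := charP_of_injective_algebraMap' (ZMod 3) 3

noncomputable def quadTrace (a : F) : F → ZMod 3 := fun x => Algebra.trace (ZMod 3) F (a * x ^ 2)

noncomputable def linTrace (b : F) : F → ZMod 3 := fun x => Algebra.trace (ZMod 3) F (b * x)

theorem quadTrace_zero : quadTrace (0 : F) = 0 := by
  funext x; simp [quadTrace]

theorem quadTrace_add (a c : F) : quadTrace (a + c) = quadTrace a + quadTrace c := by
  funext x; simp [quadTrace, add_mul]

theorem linTrace_zero : linTrace (0 : F) = 0 := by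
  funext x; simp [linTrace]

theorem linTrace_add (b c : F) : linTrace (b + c) = linTrace b + linTrace c := by
  funext x; simp [linTrace, add_mul]

theorem linTrace_neg (b : F) : linTrace (-b) = -linTrace b := by
  funext x; simp [linTrace]

variable [Fintype F]

theorem exists_card_quadTrace_eq {k : ℕ} (hF : Fintype.card F = 3 ^ (2 * k + 1)) {a : F}
    (ha : a ≠ 0) : ∃ w : ZMod 3, #{x | quadTrace a x = 0} = 3 ^ (2 * k) ∧
      #{x | quadTrace a x = w} = 3 ^ (2 * k) + 3 ^ k ∧
      #{x | quadTrace a x = -w} + 3 ^ k = 3 ^ (2 * k) := by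
  classical
  have : Module.Finite (ZMod 3) F := .of_finite
  have : CharP F 3 := charP_three_of_algebra
  have hζ : IsPrimitiveRoot (Complex.exp (2 * Real.pi * Complex.I / 3)) 3 :=
    Complex.isPrimitiveRoot_exp 3 (by norm_num)
  set ζ := Complex.exp (2 * Real.pi * Complex.I / 3)
  have hζ' : ζ ^ 2 + ζ + 1 = 0 := by
    have := hζ.geom_sum_eq_zero (by norm_num)
    simp only [Finset.sum_range_succ, Finset.sum_range_zero, pow_zero, pow_one, zero_add] at this
    linear_combination this
  let ψ : AddChar F ℂ :=
    (AddChar.zmodChar 3 hζ.pow_eq_one).compAddMonoidHom (Algebra.trace (ZMod 3) F).toAddMonoidHom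
  have hψ : ψ ≠ 1 := by
    obtain ⟨x, hx⟩ := Algebra.trace_surjective (ZMod 3) F 1
    refine fun h => hζ.ne_one (by norm_num) ?_
    simpa [ψ, hx, AddChar.zmodChar_apply, ZMod.val_one] using DFunLike.congr_fun h x
  have hneg : quadraticChar F (-1) = -1 := by
    rw [quadraticChar_neg_one_iff_not_isSquare, FiniteField.isSquare_neg_one_iff, hF, pow_succ,
      pow_mul]
    norm_num [Nat.mul_mod, Nat.pow_mod]
  have hsq := sq_sum_addChar_mul_sq (by rw [ringChar.eq F 3]; norm_num) hψ ha
  rw [show ∑ x, ψ (a * x ^ 2) = ∑ x, AddChar.zmodChar 3 hζ.pow_eq_one (quadTrace a x) from rfl,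
    sum_zmodChar_eq, hneg, hF] at hsq
  have hcard := Fintype.card_fibers_zmod_three (quadTrace a)
  rw [hF, pow_succ, pow_mul', mul_comm] at hcard
  obtain ⟨h0, ⟨h1, h2⟩ | ⟨h1, h2⟩⟩ :=
    eq_of_sq_eq_neg_three_mul_sq hζ' hcard (by rw [hsq]; push_cast; ring)
  · exact ⟨1, by rw [h0, pow_mul'], by rw [h1, pow_mul'],
      by rw [show (-1 : ZMod 3) = 2 from rfl, h2, pow_mul']⟩
  · exact ⟨2, by rw [h0, pow_mul'], by rw [h2, pow_mul'],
      by rw [show (-2 : ZMod 3) = 1 from rfl, h1, pow_mul']⟩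

theorem quadTrace_surjective {k : ℕ} (hk : 1 ≤ k) (hF : Fintype.card F = 3 ^ (2 * k + 1)) {a : F}
    (ha : a ≠ 0) : Function.Surjective (quadTrace a) := by
  obtain ⟨w, h0, hw, hnw⟩ := exists_card_quadTrace_eq hF ha
  have hlt : 3 ^ k < 3 ^ (2 * k) := Nat.pow_lt_pow_right (by norm_num) (by omega)
  have hk0 : 0 < 3 ^ k := by positivity
  have hw0 : w ≠ 0 := by
    rintro rfl
    omega
  have hpos (u : ZMod 3) : 0 < #{x | quadTrace a x = u} := by
    have hvalues : ∀ u w : ZMod 3, w ≠ 0 → u = 0 ∨ u = w ∨ u = -w := by decide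
    obtain rfl | rfl | rfl := hvalues u w hw0
    all_goals omega
  intro u
  obtain ⟨x, hx⟩ := card_pos.1 (hpos u)
  exact ⟨x, (mem_filter.1 hx).2⟩

theorem card_trace_add_ne_zero_add_card {a : F} (ha : a ≠ 0) (b : F) (w : ZMod 3) :
    #{x | Algebra.trace (ZMod 3) F (a * x ^ 2 + b * x) + (Algebra.trace (ZMod 3) F (b ^ 2 / a) - w)
      ≠ 0} + #{x | quadTrace a x = w} = Fintype.card F := by
  classical
  have : CharP F 3 := charP_three_of_algebra
  have htranslate (x : F) : Algebra.trace (ZMod 3) F (a * x ^ 2 + b * x) +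
      (Algebra.trace (ZMod 3) F (b ^ 2 / a) - w) = quadTrace a (x - b / a) - w := by
    simp only [quadTrace, ← mul_sq_add_mul_add_sq_div_eq ha, map_add]
    ring
  simp_rw [htranslate, sub_ne_zero]
  rw [Fintype.card_filter_sub_eq (fun y => quadTrace a y ≠ w), add_comm,
    card_filter_add_card_filter_not, card_univ]

theorem exists_ne_zero_trace_eq_zero (hcard : 3 < Fintype.card F) :
    ∃ c : F, c ≠ 0 ∧ Algebra.trace (ZMod 3) F c = 0 := by
  obtain ⟨c₁, c₂, hne, heq⟩ :=
    Fintype.exists_ne_map_eq_of_card_lt (Algebra.trace (ZMod 3) F) (by simpa using hcard)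
  exact ⟨c₁ - c₂, sub_ne_zero.2 hne, by rw [map_sub, heq, sub_self]⟩

end TernaryTrace

section SquaredCodewords

variable {F : Type*} [Field F] [Algebra (ZMod 3) F]

/-- `Tr(ax² + bx) + Tr(b²/a) - w a = Tr(a(x - b/a)²) - w a` is a translate of `Tr(ax²) - w a`; when
`w a` is the most frequent value of `Tr(ax²)` these are minimum-weight codewords, and their squares
are the incidence vectors of their supports. -/
def ContainsSquaredCodewords (V : Submodule (ZMod 3) (F → ZMod 3)) (w : F → ZMod 3) : Prop :=
  ∀ a ≠ 0, ∀ b, (quadTrace a + linTrace b +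
    algebraMap (ZMod 3) (F → ZMod 3) (Algebra.trace (ZMod 3) F (b ^ 2 / a) - w a)) ^ 2 ∈ V

namespace ContainsSquaredCodewords

variable {V : Submodule (ZMod 3) (F → ZMod 3)} {w : F → ZMod 3}

theorem sq_add_sq_mem (hV : ContainsSquaredCodewords V w) {a : F} (ha : a ≠ 0) (b : F) :
    (quadTrace a + algebraMap (ZMod 3) (F → ZMod 3) (Algebra.trace (ZMod 3) F (b ^ 2 / a) - w a))
      ^ 2 + linTrace b ^ 2 ∈ V := by
  convert V.neg_mem (V.add_mem (hV a ha b) (hV a ha (-b))) using 1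
  rw [linTrace_neg, neg_sq]
  set K := algebraMap (ZMod 3) (F → ZMod 3) (Algebra.trace (ZMod 3) F (b ^ 2 / a) - w a)
  linear_combination ((quadTrace a + K) ^ 2 + linTrace b ^ 2) * Pi.three_eq_zero

theorem add_const_mul_linTrace_mem (hV : ContainsSquaredCodewords V w) {a : F} (ha : a ≠ 0)
    (b : F) : (quadTrace a +
      algebraMap (ZMod 3) (F → ZMod 3) (Algebra.trace (ZMod 3) F (b ^ 2 / a) - w a)) * linTrace b
      ∈ V := by
  convert V.sub_mem (hV a ha b) (hV a ha (-b)) using 1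
  rw [linTrace_neg, neg_sq]
  set K := algebraMap (ZMod 3) (F → ZMod 3) (Algebra.trace (ZMod 3) F (b ^ 2 / a) - w a)
  linear_combination (-(quadTrace a + K) * linTrace b) * Pi.three_eq_zero

theorem linTrace_mem_of_trace_eq (hV : ContainsSquaredCodewords V w) {a : F} (ha : a ≠ 0)
    {b b' : F} (h₁ : Algebra.trace (ZMod 3) F (b' * (b - b') / a) = 1)
    (h₀ : Algebra.trace (ZMod 3) F (b * (b' - b) / a) = 0) : linTrace b ∈ V := by
  have : CharP F 3 := charP_three_of_algebra
  set K := fun c : F =>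
    algebraMap (ZMod 3) (F → ZMod 3) (Algebra.trace (ZMod 3) F (c ^ 2 / a) - w a)
  have e₁ : K b - K (b + b') = 1 := by
    rw [← map_sub, sub_sub_sub_cancel_right, ← map_sub, ← sub_div,
      show b ^ 2 - (b + b') ^ 2 = b' * (b - b') by
        linear_combination (-b * b') * CharP.cast_eq_zero F 3, h₁, map_one]
  have e₀ : K b' - K (b + b') = 0 := by
    rw [← map_sub, sub_sub_sub_cancel_right, ← map_sub, ← sub_div,
      show b' ^ 2 - (b + b') ^ 2 = b * (b' - b) by
        linear_combination (-b * b') * CharP.cast_eq_zero F 3, h₀, map_zero]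
  -- `Y c = (Q_a + K c) L_c` satisfies `Y b + Y b' - Y (b + b') = L_b`
  convert V.sub_mem (V.add_mem (hV.add_const_mul_linTrace_mem ha b)
    (hV.add_const_mul_linTrace_mem ha b')) (hV.add_const_mul_linTrace_mem ha (b + b')) using 1
  rw [linTrace_add]
  linear_combination (-linTrace b) * e₁ - linTrace b' * e₀

variable [Fintype F]

theorem linTrace_sq_mem (hcard : 3 < Fintype.card F) (hV : ContainsSquaredCodewords V w) (b : F) :
    linTrace b ^ 2 ∈ V := by
  rcases eq_or_ne b 0 with rfl | hb
  · simp [linTrace_zero]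
  obtain ⟨c, hc, htr⟩ := exists_ne_zero_trace_eq_zero hcard
  have hb2 : b ^ 2 ≠ 0 := pow_ne_zero 2 hb
  have h := V.sub_mem (hV.sq_add_sq_mem (div_ne_zero hb2 hc) b) (hV _ (div_ne_zero hb2 hc) 0)
  rwa [div_div_cancel₀ hb2, htr, linTrace_zero, add_zero, zero_pow two_ne_zero, zero_div, map_zero,
    add_sub_cancel_left] at h

theorem linTrace_mem (hcard : 3 < Fintype.card F) (hV : ContainsSquaredCodewords V w) (b : F) :
    linTrace b ∈ V := by
  rcases eq_or_ne b 0 with rfl | hb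
  · simp [linTrace_zero]
  obtain ⟨c₀, hc₀, htr₀⟩ := exists_ne_zero_trace_eq_zero hcard
  obtain ⟨c, hc, hbc⟩ : ∃ c : F, c ≠ 0 ∧ Algebra.trace (ZMod 3) F (b * c) = 0 :=
    ⟨c₀ / b, div_ne_zero hc₀ hb, by rwa [mul_div_cancel₀ _ hb]⟩
  obtain ⟨y, hy⟩ := Algebra.trace_surjective (ZMod 3) F (-1)
  have hy0 : y ≠ 0 := by rintro rfl; simp at hy
  have ha : y / c ^ 2 ≠ 0 := div_ne_zero hy0 (pow_ne_zero 2 hc)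
  -- with `a = y / c²` and `b' = b - a c` the two traces become `Tr(bc) - Tr(y)` and `-Tr(bc)`
  refine hV.linTrace_mem_of_trace_eq ha (b' := b - y / c ^ 2 * c) ?_ ?_
  · rw [show (b - y / c ^ 2 * c) * (b - (b - y / c ^ 2 * c)) / (y / c ^ 2) = b * c - y by
      field_simp; ring, map_sub, hbc, hy, zero_sub, neg_neg]
  · rw [show b * (b - y / c ^ 2 * c - b) / (y / c ^ 2) = -(b * c) by field_simp; ring, map_neg, hbc,
      neg_zero]

theorem quadTrace_add_const_sq_mem (hcard : 3 < Fintype.card F)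
    (hsurj : ∀ a : F, a ≠ 0 → Function.Surjective (quadTrace a))
    (hV : ContainsSquaredCodewords V w) {a : F} (ha : a ≠ 0) (k : ZMod 3) :
    (quadTrace a + algebraMap (ZMod 3) (F → ZMod 3) k) ^ 2 ∈ V := by
  obtain ⟨b, hb⟩ := hsurj a⁻¹ (inv_ne_zero ha) (k + w a)
  have h := V.sub_mem (hV.sq_add_sq_mem ha b) (hV.linTrace_sq_mem hcard b)
  rwa [add_sub_cancel_right, div_eq_inv_mul, show Algebra.trace (ZMod 3) F (a⁻¹ * b ^ 2) =
    quadTrace a⁻¹ b from rfl, hb, add_sub_cancel_right] at h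

theorem quadTrace_mem (hcard : 3 < Fintype.card F)
    (hsurj : ∀ a : F, a ≠ 0 → Function.Surjective (quadTrace a))
    (hV : ContainsSquaredCodewords V w) (a : F) : quadTrace a ∈ V := by
  rcases eq_or_ne a 0 with rfl | ha
  · simp [quadTrace_zero]
  convert V.sub_mem (hV.quadTrace_add_const_sq_mem hcard hsurj ha 1)
    (hV.quadTrace_add_const_sq_mem hcard hsurj ha 2) using 1
  rw [map_one, map_ofNat]
  linear_combination (quadTrace a + 1) * Pi.three_eq_zero

theorem one_mem (hcard : 3 < Fintype.card F)
    (hsurj : ∀ a : F, a ≠ 0 → Function.Surjective (quadTrace a))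
    (hV : ContainsSquaredCodewords V w) : (1 : F → ZMod 3) ∈ V := by
  have h (k : ZMod 3) := hV.quadTrace_add_const_sq_mem hcard hsurj one_ne_zero k
  convert V.neg_mem (V.add_mem (V.add_mem (h 0) (h 1)) (h 2)) using 1
  rw [map_zero, map_one, map_ofNat]
  linear_combination (quadTrace (1 : F) ^ 2 + 2 * quadTrace (1 : F) + 2) * Pi.three_eq_zero

theorem quadTrace_sq_mem (hcard : 3 < Fintype.card F)
    (hsurj : ∀ a : F, a ≠ 0 → Function.Surjective (quadTrace a))
    (hV : ContainsSquaredCodewords V w) (a : F) : quadTrace a ^ 2 ∈ V := by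
  rcases eq_or_ne a 0 with rfl | ha
  · simp [quadTrace_zero]
  simpa using hV.quadTrace_add_const_sq_mem hcard hsurj ha 0

theorem quadTrace_mul_quadTrace_mem (hcard : 3 < Fintype.card F)
    (hsurj : ∀ a : F, a ≠ 0 → Function.Surjective (quadTrace a))
    (hV : ContainsSquaredCodewords V w) (a c : F) : quadTrace a * quadTrace c ∈ V :=
  Submodule.mul_mem_of_sq_mem (by decide) (hV.quadTrace_sq_mem hcard hsurj a)
    (hV.quadTrace_sq_mem hcard hsurj c) (quadTrace_add a c ▸ hV.quadTrace_sq_mem hcard hsurj _)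

theorem linTrace_mul_linTrace_mem (hcard : 3 < Fintype.card F)
    (hV : ContainsSquaredCodewords V w) (b c : F) : linTrace b * linTrace c ∈ V :=
  Submodule.mul_mem_of_sq_mem (by decide) (hV.linTrace_sq_mem hcard b)
    (hV.linTrace_sq_mem hcard c) (linTrace_add b c ▸ hV.linTrace_sq_mem hcard _)

theorem quadTrace_mul_linTrace_mem (hcard : 3 < Fintype.card F)
    (hV : ContainsSquaredCodewords V w) (a b : F) : quadTrace a * linTrace b ∈ V := by
  rcases eq_or_ne a 0 with rfl | ha
  · simp [quadTrace_zero]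
  convert V.sub_mem (hV.add_const_mul_linTrace_mem ha b)
    (V.smul_mem (Algebra.trace (ZMod 3) F (b ^ 2 / a) - w a) (hV.linTrace_mem hcard b)) using 1
  rw [Algebra.smul_def]
  ring

end ContainsSquaredCodewords

variable (F) in
def traceProductSet : Set (F → ZMod 3) :=
  {f | ∃ a b : F, f = quadTrace a * quadTrace b} ∪ {f | ∃ a b : F, f = quadTrace a * linTrace b} ∪
    {f | ∃ a b : F, f = linTrace a * linTrace b} ∪ {f | ∃ b : F, f = linTrace b} ∪ {1}

theorem ContainsSquaredCodewords.traceProductSet_subset [Fintype F]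
    {V : Submodule (ZMod 3) (F → ZMod 3)} {w : F → ZMod 3} (hcard : 3 < Fintype.card F)
    (hsurj : ∀ a : F, a ≠ 0 → Function.Surjective (quadTrace a))
    (hV : ContainsSquaredCodewords V w) : traceProductSet F ⊆ V := by
  rintro _ ((((⟨a, c, rfl⟩ | ⟨a, b, rfl⟩) | ⟨b, c, rfl⟩) | ⟨b, rfl⟩) | rfl)
  · exact hV.quadTrace_mul_quadTrace_mem hcard hsurj a c
  · exact hV.quadTrace_mul_linTrace_mem hcard a b
  · exact hV.linTrace_mul_linTrace_mem hcard b c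
  · exact hV.linTrace_mem hcard b
  · exact hV.one_mem hcard hsurj

theorem sq_trace_add_const_mem_span [Fintype F] (a b : F) (h : ZMod 3) :
    (fun x => (Algebra.trace (ZMod 3) F (a * x ^ 2 + b * x) + h) ^ 2) ∈
      Submodule.span (ZMod 3) (traceProductSet F) := by
  have : Module.Finite (ZMod 3) F := .of_finite
  have hexpand : (fun x => (Algebra.trace (ZMod 3) F (a * x ^ 2 + b * x) + h) ^ 2) =
      quadTrace a * quadTrace a + (2 : ZMod 3) • (quadTrace a * linTrace b) +
        linTrace b * linTrace b + (2 * h) • quadTrace a + (2 * h) • linTrace b + h ^ 2 • 1 := by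
    funext x
    simp only [quadTrace, linTrace, map_add, Pi.add_apply, Pi.mul_apply, Pi.smul_apply,
      Pi.one_apply, smul_eq_mul]
    ring
  have hQ : quadTrace a ∈ Submodule.span (ZMod 3) (traceProductSet F) := by
    refine Submodule.span_mono ?_ (Algebra.trace_mul_sq_mem_span a)
    rintro _ ⟨c, d, rfl⟩
    exact Or.inl (Or.inl (Or.inr ⟨c, d, rfl⟩))
  have hgen {f} (hf : f ∈ traceProductSet F) := Submodule.subset_span (R := ZMod 3) hf
  rw [hexpand]
  exact add_mem (add_mem (add_mem (add_mem (add_mem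
    (hgen (Or.inl (Or.inl (Or.inl (Or.inl ⟨a, a, rfl⟩)))))
    (Submodule.smul_mem _ _ (hgen (Or.inl (Or.inl (Or.inl (Or.inr ⟨a, b, rfl⟩)))))))
    (hgen (Or.inl (Or.inl (Or.inr ⟨b, b, rfl⟩)))))
    (Submodule.smul_mem _ _ hQ))
    (Submodule.smul_mem _ _ (hgen (Or.inl (Or.inr ⟨b, rfl⟩)))))
    (Submodule.smul_mem _ _ (hgen (Or.inr rfl)))

end SquaredCodewords

theorem code_of_design_eq_span_general (m : ℕ) (hm : 5 ≤ m) (hmodd : Odd m)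
    (F : Type) [Field F] [Fintype F] [Algebra (ZMod 3) F]
    (hF : Fintype.card F = 3 ^ m) :
    Submodule.span (ZMod 3)
      {v : F → ZMod 3 | ∃ c : F → ZMod 3,
        (∃ a b : F, ∃ h : ZMod 3,
          c = fun x => Algebra.trace (ZMod 3) F (a * x ^ 2 + b * x) + h) ∧
        (Finset.univ.filter fun x : F => c x ≠ 0).card =
          2 * 3 ^ (m - 1) - 3 ^ ((m - 1) / 2) ∧
        v = fun x => if c x ≠ 0 then 1 else 0} =
    Submodule.span (ZMod 3)
      ({f : F → ZMod 3 | ∃ a b : F, f = fun x =>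
          Algebra.trace (ZMod 3) F (a * x ^ 2) * Algebra.trace (ZMod 3) F (b * x ^ 2)} ∪
       {f : F → ZMod 3 | ∃ a b : F, f = fun x =>
          Algebra.trace (ZMod 3) F (a * x ^ 2) * Algebra.trace (ZMod 3) F (b * x)} ∪
       {f : F → ZMod 3 | ∃ a b : F, f = fun x =>
          Algebra.trace (ZMod 3) F (a * x) * Algebra.trace (ZMod 3) F (b * x)} ∪
       {f : F → ZMod 3 | ∃ b : F, f = fun x => Algebra.trace (ZMod 3) F (b * x)} ∪
       {fun _ => 1}) := by
  obtain ⟨k, rfl⟩ := hmodd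
  rw [show 2 * k + 1 - 1 = 2 * k by omega, show 2 * k / 2 = k by omega]
  have hk : 1 ≤ k := by omega
  have hcard : 3 < Fintype.card F :=
    hF ▸ Nat.pow_lt_pow_right (a := 3) (m := 1) (by norm_num) (by omega)
  change _ = Submodule.span (ZMod 3) (traceProductSet F)
  apply le_antisymm
  · rw [Submodule.span_le]
    rintro _ ⟨_, ⟨a, b, h, rfl⟩, -, rfl⟩
    simpa only [← ZMod.sq_eq_ite_ne_zero_three, SetLike.mem_coe] using
      sq_trace_add_const_mem_span a b h
  · have hmode (a : F) :
        ∃ w : ZMod 3, a ≠ 0 → #{x | quadTrace a x = w} = 3 ^ (2 * k) + 3 ^ k := by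
      rcases eq_or_ne a 0 with rfl | ha
      · exact ⟨0, fun h => absurd rfl h⟩
      · obtain ⟨w, -, hw, -⟩ := exists_card_quadTrace_eq hF ha
        exact ⟨w, fun _ => hw⟩
    choose w hw using hmode
    refine Submodule.span_le.2 (ContainsSquaredCodewords.traceProductSet_subset (w := w) hcard
      (fun a ha => quadTrace_surjective hk hF ha) fun a ha b => Submodule.subset_span ?_)
    refine ⟨_, ⟨a, b, Algebra.trace (ZMod 3) F (b ^ 2 / a) - w a, rfl⟩, ?_, ?_⟩
    · have := card_trace_add_ne_zero_add_card ha b (w a)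
      rw [hw a ha, hF, pow_succ 3 (2 * k)] at this
      omega
    · funext x
      simp only [Pi.pow_apply, Pi.add_apply, quadTrace, linTrace, map_add]
      exact ZMod.sq_eq_ite_ne_zero_three _

/-- for odd `m ≥ 5`, the ternary code spanned by the incidence vectors of
the supports of the minimum-weight codewords of `C(m,3)` equals the `GF(3)`-span of the
functions `Tr(ax²)Tr(bx²)`, `Tr(ax²)Tr(bx)`, `Tr(ax)Tr(bx)`, `Tr(bx)`, `1`. -/
theorem code_of_design_eq_span (m : ℕ) (hm : 5 ≤ m) (hmodd : Odd m)
    (F : Type) [Field F] [Fintype F] [DecidableEq F] [Algebra (ZMod 3) F]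
    (hF : Fintype.card F = 3 ^ m) :
    Submodule.span (ZMod 3)
      {v : F → ZMod 3 | ∃ c : F → ZMod 3,
        (∃ a b : F, ∃ h : ZMod 3,
          c = fun x => Algebra.trace (ZMod 3) F (a * x ^ 2 + b * x) + h) ∧
        (Finset.univ.filter fun x : F => c x ≠ 0).card =
          2 * 3 ^ (m - 1) - 3 ^ ((m - 1) / 2) ∧
        v = fun x => if c x ≠ 0 then 1 else 0} =
    Submodule.span (ZMod 3)
      ({f : F → ZMod 3 | ∃ a b : F, f = fun x =>
          Algebra.trace (ZMod 3) F (a * x ^ 2) * Algebra.trace (ZMod 3) F (b * x ^ 2)} ∪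
       {f : F → ZMod 3 | ∃ a b : F, f = fun x =>
          Algebra.trace (ZMod 3) F (a * x ^ 2) * Algebra.trace (ZMod 3) F (b * x)} ∪
       {f : F → ZMod 3 | ∃ a b : F, f = fun x =>
          Algebra.trace (ZMod 3) F (a * x) * Algebra.trace (ZMod 3) F (b * x)} ∪
       {f : F → ZMod 3 | ∃ b : F, f = fun x => Algebra.trace (ZMod 3) F (b * x)} ∪
       {fun _ => 1}) :=
  code_of_design_eq_span_general m hm hmodd F hF
end

section
/- Let m ≥ 5 be odd. The code C₃(D_d(C(m,3))) is a subcode of the fourth-order generalized Reed-Muller code R₃(4, m) over GF(3), and hence its minimum distance is at least 3^{m−2}. -/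
/-!
Over `GF(3)` the indicator of `c ≠ 0` is `c ^ 2`, and `c = Tr(a x² + b x) + h` is a polynomial of
degree at most `2` in the coordinates of `x`, so every generator of the code, hence the code, lies in
`R₃(4, m)`. The weight bound is the minimum distance of `R₃(d, n)`, proved by induction on `n`:
split off the first variable as `f (a, x) = g₀ x + a g₁ x + a² g₂ x` with `deg gⱼ ≤ d - j`. If no
slice `f (a, ·)` vanishes, the three slices each contribute the bound for `(d, n)`. If `f (a, ·) = 0`,
the other slices are `(b - a) (g₁ + (b + a) g₂)`, of degree `≤ d - 1`; if moreover `f (b, ·) = 0`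
for some `b ≠ a`, the remaining slice is a unit multiple of `g₂`, of degree `≤ d - 2`.
-/

open Finset

section Hamming

variable {α γ β : Type*} [Fintype α] [Fintype γ] [Zero β] [DecidableEq β]

lemma hammingNorm_comp_equiv (v : γ → β) (e : α ≃ γ) : hammingNorm (v ∘ e) = hammingNorm v :=
  card_equiv e (by simp)

lemma hammingNorm_prod (v : α × γ → β) : hammingNorm v = ∑ a, hammingNorm fun x => v (a, x) := by
  simp only [hammingNorm, card_filter, Fintype.sum_prod_type]

lemma hammingNorm_eq_sum_slices {n : ℕ} (v : (Fin (n + 1) → α) → β) :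
    hammingNorm v = ∑ a, hammingNorm fun x => v (Fin.cons a x) := by
  rw [← hammingNorm_comp_equiv v (Fin.consEquiv fun _ => α), hammingNorm_prod]
  rfl

lemma hammingNorm_mul_left {K : Type*} [Field K] [DecidableEq K] {c : K} (hc : c ≠ 0)
    (v : α → K) : hammingNorm (fun x => c * v x) = hammingNorm v :=
  hammingNorm_smul (fun _ => IsSMulRegular.of_ne_zero hc) v

end Hamming

section PolyFunctions

open MvPolynomial

variable (σ R : Type*) [CommRing R]

/-- For `σ = Fin n` and `R = GF(q)` this is the generalized Reed–Muller code `R_q(d, n)`. -/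
noncomputable def polyFunctions (d : ℕ) : Submodule R ((σ → R) → R) :=
  (restrictTotalDegree σ R d).map (evalₗ R σ)

variable {σ R}

lemma mem_polyFunctions {d : ℕ} {f : (σ → R) → R} :
    f ∈ polyFunctions σ R d ↔ ∃ p : MvPolynomial σ R, p.totalDegree ≤ d ∧ ∀ x, eval x p = f x := by
  simp only [polyFunctions, Submodule.mem_map, mem_restrictTotalDegree, funext_iff, evalₗ_apply]

lemma polyFunctions_mono {d d' : ℕ} (h : d ≤ d') : polyFunctions σ R d ≤ polyFunctions σ R d' :=
  Submodule.map_mono fun _ hp => (mem_restrictTotalDegree _ _ _).2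
    (((mem_restrictTotalDegree _ _ _).1 hp).trans h)

lemma const_mem_polyFunctions (r : R) : (fun _ => r) ∈ polyFunctions σ R 0 :=
  mem_polyFunctions.2 ⟨C r, by simp, fun _ => eval_C r⟩

lemma mul_mem_polyFunctions {d d' : ℕ} {f g : (σ → R) → R} (hf : f ∈ polyFunctions σ R d)
    (hg : g ∈ polyFunctions σ R d') : f * g ∈ polyFunctions σ R (d + d') := by
  obtain ⟨p, hp, hpf⟩ := mem_polyFunctions.1 hf
  obtain ⟨q, hq, hqg⟩ := mem_polyFunctions.1 hg
  exact mem_polyFunctions.2 ⟨p * q, (totalDegree_mul p q).trans (add_le_add hp hq),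
    fun x => by simp [hpf, hqg]⟩

variable [Fintype σ]

lemma linearMap_mem_polyFunctions (ℓ : (σ → R) →ₗ[R] R) : ⇑ℓ ∈ polyFunctions σ R 1 := by
  classical
  refine mem_polyFunctions.2
    ⟨∑ i, monomial (Finsupp.single i 1) (ℓ fun j => if i = j then 1 else 0), ?_, fun x => ?_⟩
  · refine totalDegree_finsetSum_le fun i _ => (totalDegree_monomial_le _ _).trans ?_
    simp
  · simp [ℓ.pi_apply_eq_sum_univ x, eval_monomial, Finsupp.prod_single_index, mul_comm]

lemma bilin_diag_mem_polyFunctions (B : (σ → R) →ₗ[R] (σ → R) →ₗ[R] R) :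
    (fun x => B x x) ∈ polyFunctions σ R 2 := by
  classical
  have hB : (fun x => B x x) = ∑ i, (fun x => x i) * ⇑(B fun j => if i = j then 1 else 0) := by
    ext x
    conv_lhs => rw [B.pi_apply_eq_sum_univ x]
    simp
  rw [hB]
  exact Submodule.sum_mem _ fun i _ => mul_mem_polyFunctions (d := 1) (d' := 1)
    (linearMap_mem_polyFunctions (LinearMap.proj i)) (linearMap_mem_polyFunctions _)

lemma trace_quadratic_mem_polyFunctions {F : Type*} [CommRing F] [Algebra R F]
    (L : (σ → R) →ₗ[R] F) (a b : F) (h : R) :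
    (fun x => Algebra.trace R F (a * L x ^ 2 + b * L x) + h) ∈ polyFunctions σ R 2 := by
  let B := (Algebra.traceForm R F).compl₁₂ (LinearMap.mulLeft R a ∘ₗ L) L
  let ℓ := Algebra.trace R F ∘ₗ LinearMap.mulLeft R b ∘ₗ L
  have hsplit : (fun x => Algebra.trace R F (a * L x ^ 2 + b * L x) + h) =
      (fun x => B x x) + ⇑ℓ + fun _ => h := by
    ext x
    simp [B, ℓ, sq, mul_assoc]
  rw [hsplit]
  exact add_mem (add_mem (bilin_diag_mem_polyFunctions B)
    (polyFunctions_mono one_le_two (linearMap_mem_polyFunctions ℓ)))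
    (polyFunctions_mono (Nat.zero_le 2) (const_mem_polyFunctions h))

end PolyFunctions

/-- The minimum distance of `R₃(d, n)`: `(3 - ℓ₀) * 3 ^ (n - ℓ₁ - 1)` for `d = 2 ℓ₁ + ℓ₀ < 2 n`,
and `1` once `d ≥ 2 n`, when `R₃(d, n)` contains every function. -/
def grmDistance (d n : ℕ) : ℕ := if d < 2 * n then (3 - d % 2) * 3 ^ (n - 1 - d / 2) else 1

lemma grmDistance_zero_right (d : ℕ) : grmDistance d 0 = 1 := by simp [grmDistance]

lemma grmDistance_succ_le (d n : ℕ) : grmDistance d (n + 1) ≤ 3 * grmDistance d n := by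
  unfold grmDistance
  split_ifs
  · rw [show n + 1 - 1 - d / 2 = n - 1 - d / 2 + 1 by omega, pow_succ]
    nlinarith
  · rw [show n + 1 - 1 - d / 2 = 0 by omega]
    omega
  all_goals omega

lemma grmDistance_succ_succ_le (d n : ℕ) :
    grmDistance (d + 1) (n + 1) ≤ 2 * grmDistance d n := by
  unfold grmDistance
  split_ifs
  · rcases Nat.mod_two_eq_zero_or_one d with h | h
    · rw [show (d + 1) % 2 = 1 by omega, h,
        show n + 1 - 1 - (d + 1) / 2 = n - 1 - d / 2 + 1 by omega, pow_succ]
      ring_nf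
      rfl
    · rw [show (d + 1) % 2 = 0 by omega, h,
        show n + 1 - 1 - (d + 1) / 2 = n - 1 - d / 2 by omega]
      nlinarith [Nat.zero_le (3 ^ (n - 1 - d / 2))]
  · rw [show n + 1 - 1 - (d + 1) / 2 = 0 by omega]
    omega
  all_goals omega

lemma grmDistance_add_two_succ (d n : ℕ) : grmDistance (d + 2) (n + 1) = grmDistance d n := by
  unfold grmDistance
  rw [Nat.add_mod_right, show n + 1 - 1 - (d + 2) / 2 = n - 1 - d / 2 by omega]
  simp only [show d + 2 < 2 * (n + 1) ↔ d < 2 * n by omega]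

lemma grmDistance_four (m : ℕ) : grmDistance 4 m = 3 ^ (m - 2) := by
  unfold grmDistance
  split_ifs
  · rw [show m - 2 = m - 1 - 4 / 2 + 1 by omega, pow_succ]
    ring
  · rw [show m - 2 = 0 by omega]
    rfl

section ZModThree

lemma zmod_three_ite_ne_zero (z : ZMod 3) : (if z ≠ 0 then 1 else 0) = z ^ 2 := by
  revert z
  decide

lemma zmod_three_pow_succ (a : ZMod 3) (k : ℕ) : a ^ (k + 1) = if Even k then a else a ^ 2 := by
  induction k with
  | zero => simp
  | succ k ih =>
    rw [pow_succ, ih]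
    by_cases hk : Even k
    · simp [hk, Nat.even_add_one, sq]
    · simp [hk, Nat.even_add_one, ← pow_succ, ZMod.pow_card]

def reducedExponent (k : ℕ) : Fin 3 := if k = 0 then 0 else if Even k then 2 else 1

lemma reducedExponent_le (k : ℕ) : (reducedExponent k : ℕ) ≤ k := by
  rcases k with _ | k
  · simp [reducedExponent]
  · by_cases hk : Even k
    · simp [reducedExponent, hk, Nat.even_add_one]
    · simp [reducedExponent, hk, Nat.even_add_one]
      exact (Nat.not_even_iff_odd.1 hk).pos

lemma zmod_three_pow_reducedExponent (a : ZMod 3) (k : ℕ) :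
    a ^ (reducedExponent k : ℕ) = a ^ k := by
  rcases k with _ | k
  · simp [reducedExponent]
  · rw [zmod_three_pow_succ]
    by_cases hk : Even k <;> simp [reducedExponent, hk, Nat.even_add_one]

end ZModThree

section MinimumDistance

open MvPolynomial

lemma exists_slice_decomposition {n d : ℕ} {f : (Fin (n + 1) → ZMod 3) → ZMod 3}
    (hf : f ∈ polyFunctions (Fin (n + 1)) (ZMod 3) d) :
    ∃ g : Fin 3 → (Fin n → ZMod 3) → ZMod 3,
      (∀ j : Fin 3, g j ∈ polyFunctions (Fin n) (ZMod 3) (d - j)) ∧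
      (∀ j : Fin 3, d < j → g j = 0) ∧
      ∀ a x, f (Fin.cons a x) = ∑ j : Fin 3, a ^ (j : ℕ) * g j x := by
  obtain ⟨p, hp, hpf⟩ := mem_polyFunctions.1 hf
  set q := finSuccEquiv (ZMod 3) n p
  have hq : ∀ k, q.coeff k ≠ 0 → (q.coeff k).totalDegree + k ≤ d := fun k hk =>
    (totalDegree_coeff_finSuccEquiv_add_le p k hk).trans hp
  let G (j : Fin 3) : MvPolynomial (Fin n) (ZMod 3) :=
    ∑ k ∈ range (q.natDegree + 1) with reducedExponent k = j, q.coeff k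
  refine ⟨fun j x => eval x (G j), fun j => mem_polyFunctions.2 ⟨G j, ?_, fun _ => rfl⟩,
    fun j hj => ?_, fun a x => ?_⟩
  · refine totalDegree_finsetSum_le fun k hk => ?_
    rw [mem_filter] at hk
    by_cases hk0 : q.coeff k = 0
    · simp [hk0]
    · have := hq k hk0
      have := reducedExponent_le k
      omega
  · ext x
    refine (congrArg (eval x) (sum_eq_zero fun k hk => ?_)).trans (map_zero _)
    rw [mem_filter] at hk
    by_contra hk0
    have := hq k hk0
    have := reducedExponent_le k
    omega
  · rw [← hpf, eval_eq_eval_mv_eval',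
      Polynomial.eval_eq_sum_range' (Polynomial.natDegree_map_le.trans_lt q.natDegree.lt_succ_self),
      ← sum_fiberwise _ reducedExponent]
    simp only [G, map_sum, mul_sum, Polynomial.coeff_map]
    refine sum_congr rfl fun j _ => sum_congr rfl fun k hk => ?_
    obtain ⟨-, rfl⟩ := mem_filter.1 hk
    rw [zmod_three_pow_reducedExponent, mul_comm]

variable {n : ℕ}

lemma grmDistance_le_sum_of_slices_ne_zero
    (ih : ∀ {d : ℕ} {g : (Fin n → ZMod 3) → ZMod 3},
      g ∈ polyFunctions (Fin n) (ZMod 3) d → g ≠ 0 → grmDistance d n ≤ hammingNorm g)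
    {d : ℕ} {s : ZMod 3 → (Fin n → ZMod 3) → ZMod 3}
    (hs : ∀ a, s a ∈ polyFunctions (Fin n) (ZMod 3) d) (hs0 : ∀ a, s a ≠ 0) :
    grmDistance d (n + 1) ≤ ∑ a, hammingNorm (s a) :=
  calc grmDistance d (n + 1) ≤ 3 * grmDistance d n := grmDistance_succ_le d n
    _ = #(univ : Finset (ZMod 3)) • grmDistance d n := by simp [ZMod.card]
    _ ≤ ∑ a, hammingNorm (s a) := card_nsmul_le_sum _ _ _ fun a _ => ih (hs a) (hs0 a)

lemma grmDistance_add_one_le_sum_of_slices_eq_mul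
    (ih : ∀ {d : ℕ} {g : (Fin n → ZMod 3) → ZMod 3},
      g ∈ polyFunctions (Fin n) (ZMod 3) d → g ≠ 0 → grmDistance d n ≤ hammingNorm g)
    {d : ℕ} {s h : ZMod 3 → (Fin n → ZMod 3) → ZMod 3} {a : ZMod 3}
    (hh : ∀ b, h b ∈ polyFunctions (Fin n) (ZMod 3) d)
    (hs : ∀ b x, s b x = (b - a) * h b x) (hs0 : ∀ b ≠ a, s b ≠ 0) :
    grmDistance (d + 1) (n + 1) ≤ ∑ b, hammingNorm (s b) := by
  have hnorm : ∀ b ≠ a, grmDistance d n ≤ hammingNorm (s b) := fun b hb => by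
    have hsb : s b = fun x => (b - a) * h b x := funext (hs b)
    rw [hsb, hammingNorm_mul_left (sub_ne_zero.2 hb)]
    exact ih (hh b) fun h0 => hs0 b hb (by ext x; simp [hsb, h0])
  calc grmDistance (d + 1) (n + 1) ≤ 2 * grmDistance d n := grmDistance_succ_succ_le d n
    _ = #(univ.erase a) • grmDistance d n := by simp [card_erase_of_mem, ZMod.card]
    _ ≤ ∑ b ∈ univ.erase a, hammingNorm (s b) :=
        card_nsmul_le_sum _ _ _ fun b hb => hnorm b (ne_of_mem_erase hb)
    _ ≤ ∑ b, hammingNorm (s b) := sum_le_sum_of_subset (subset_univ _)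

lemma grmDistance_add_two_le_sum_of_slice_eq_mul
    (ih : ∀ {d : ℕ} {g : (Fin n → ZMod 3) → ZMod 3},
      g ∈ polyFunctions (Fin n) (ZMod 3) d → g ≠ 0 → grmDistance d n ≤ hammingNorm g)
    {d : ℕ} {s : ZMod 3 → (Fin n → ZMod 3) → ZMod 3} {c u : ZMod 3} (hu : u ≠ 0)
    {g : (Fin n → ZMod 3) → ZMod 3} (hg : g ∈ polyFunctions (Fin n) (ZMod 3) d)
    (hs : s c = fun x => u * g x) (hsc : s c ≠ 0) :
    grmDistance (d + 2) (n + 1) ≤ ∑ b, hammingNorm (s b) := by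
  rw [grmDistance_add_two_succ]
  calc grmDistance d n ≤ hammingNorm g := ih hg fun h0 => hsc (by ext x; simp [hs, h0])
    _ = hammingNorm (s c) := by rw [hs, hammingNorm_mul_left hu]
    _ ≤ ∑ b, hammingNorm (s b) :=
        single_le_sum (f := fun b => hammingNorm (s b)) (fun _ _ => Nat.zero_le _) (mem_univ c)

lemma grmDistance_succ_le_sum_of_slice_eq_zero
    (ih : ∀ {d : ℕ} {g : (Fin n → ZMod 3) → ZMod 3},
      g ∈ polyFunctions (Fin n) (ZMod 3) d → g ≠ 0 → grmDistance d n ≤ hammingNorm g)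
    {d : ℕ} {g : Fin 3 → (Fin n → ZMod 3) → ZMod 3}
    (hg : ∀ j : Fin 3, g j ∈ polyFunctions (Fin n) (ZMod 3) (d - j))
    (hg0 : ∀ j : Fin 3, d < j → g j = 0) {s : ZMod 3 → (Fin n → ZMod 3) → ZMod 3}
    (hs : ∀ a x, s a x = g 0 x + a * g 1 x + a ^ 2 * g 2 x) (hs_ne : ¬∀ a, s a = 0)
    {a : ZMod 3} (ha : s a = 0) :
    grmDistance d (n + 1) ≤ ∑ b, hammingNorm (s b) := by
  have hfactor : ∀ b x, s b x = (b - a) * (g 1 x + (b + a) * g 2 x) := fun b x => by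
    linear_combination hs b x - hs a x + (by simp [ha] : s a x = 0)
  by_cases hone : ∀ b ≠ a, s b ≠ 0
  · obtain ⟨d, rfl⟩ : ∃ d', d = d' + 1 := by
      refine Nat.exists_eq_add_one.2 (Nat.pos_of_ne_zero fun hd => hs_ne fun b => ?_)
      ext x
      simp [hfactor, hg0 1 (by simp [hd]), hg0 2 (by simp [hd])]
    refine grmDistance_add_one_le_sum_of_slices_eq_mul ih (fun b => ?_) hfactor hone
    exact add_mem (hg 1) (Submodule.smul_mem _ _ (polyFunctions_mono (by simp) (hg 2)))
  push Not at hone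
  obtain ⟨b, hba, hb⟩ := hone
  obtain ⟨c, hca, hcb⟩ := (by decide : ∀ a b : ZMod 3, ∃ c, c ≠ a ∧ c ≠ b) a b
  have hsc : s c = fun x => ((c - a) * (c - b)) * g 2 x := by
    ext x
    have hb0 : g 1 x + (b + a) * g 2 x = 0 := by
      simpa [sub_ne_zero.2 hba] using (hfactor b x).symm.trans (congrFun hb x)
    linear_combination hfactor c x + (c - a) * hb0
  have hsc0 : s c ≠ 0 := fun hc => hs_ne fun y => by
    obtain rfl | rfl | rfl := (by decide : ∀ a b c y : ZMod 3, b ≠ a → c ≠ a → c ≠ b →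
      y = a ∨ y = b ∨ y = c) a b c y hba hca hcb
    exacts [ha, hb, hc]
  obtain ⟨d, rfl⟩ : ∃ d', d = d' + 2 := by
    refine ⟨d - 2, (Nat.sub_add_cancel (not_lt.1 fun hd => hsc0 ?_)).symm⟩
    ext x
    simp [hsc, hg0 2 (by simpa using hd)]
  exact grmDistance_add_two_le_sum_of_slice_eq_mul ih
    (mul_ne_zero (sub_ne_zero.2 hca) (sub_ne_zero.2 hcb)) (hg 2) hsc hsc0

lemma grmDistance_succ_le_sum_hammingNorm_slices
    (ih : ∀ {d : ℕ} {g : (Fin n → ZMod 3) → ZMod 3},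
      g ∈ polyFunctions (Fin n) (ZMod 3) d → g ≠ 0 → grmDistance d n ≤ hammingNorm g)
    {d : ℕ} {f : (Fin (n + 1) → ZMod 3) → ZMod 3}
    (hf : f ∈ polyFunctions (Fin (n + 1)) (ZMod 3) d) (hf0 : f ≠ 0) :
    grmDistance d (n + 1) ≤ ∑ a, hammingNorm fun x => f (Fin.cons a x) := by
  obtain ⟨g, hg, hg0, hfg⟩ := exists_slice_decomposition hf
  set s : ZMod 3 → (Fin n → ZMod 3) → ZMod 3 := fun a x => f (Fin.cons a x)
  have hs : ∀ a x, s a x = g 0 x + a * g 1 x + a ^ 2 * g 2 x := fun a x => by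
    simp [s, hfg, Fin.sum_univ_three]
  have hs_ne : ¬∀ a, s a = 0 := fun h => hf0 (funext fun y => by
    rw [← Fin.cons_self_tail y]
    exact congrFun (h _) _)
  by_cases hzero : ∀ a, s a ≠ 0
  · refine grmDistance_le_sum_of_slices_ne_zero ih (fun a => ?_) hzero
    have hsa : s a = ∑ j : Fin 3, a ^ (j : ℕ) • g j := by ext x; simp [s, hfg]
    change s a ∈ _
    rw [hsa]
    exact sum_mem fun j _ => Submodule.smul_mem _ _ (polyFunctions_mono (Nat.sub_le d j) (hg j))
  push Not at hzero
  obtain ⟨a, ha⟩ := hzero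
  exact grmDistance_succ_le_sum_of_slice_eq_zero ih hg hg0 hs hs_ne ha

theorem grmDistance_le_hammingNorm {d : ℕ} {f : (Fin n → ZMod 3) → ZMod 3}
    (hf : f ∈ polyFunctions (Fin n) (ZMod 3) d) (hf0 : f ≠ 0) :
    grmDistance d n ≤ hammingNorm f := by
  induction n generalizing d with
  | zero => exact (grmDistance_zero_right d).trans_le (hammingNorm_pos_iff.2 hf0)
  | succ n ih =>
    rw [hammingNorm_eq_sum_slices]
    exact grmDistance_succ_le_sum_hammingNorm_slices ih hf hf0

end MinimumDistance

theorem code_subcode_of_GRM_general (m : ℕ)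
    (F : Type) [Field F] [Fintype F] [Algebra (ZMod 3) F]
    (e : Module.Basis (Fin m) (ZMod 3) F) :
    ∀ v : F → ZMod 3,
      v ∈ Submodule.span (ZMod 3)
        {v : F → ZMod 3 | ∃ c : F → ZMod 3,
          (∃ a b : F, ∃ h : ZMod 3,
            c = fun x => Algebra.trace (ZMod 3) F (a * x ^ 2 + b * x) + h) ∧
          (Finset.univ.filter fun x : F => c x ≠ 0).card =
            2 * 3 ^ (m - 1) - 3 ^ ((m - 1) / 2) ∧
          v = fun x => if c x ≠ 0 then 1 else 0} →
      (∃ p : MvPolynomial (Fin m) (ZMod 3), p.totalDegree ≤ 4 ∧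
        ∀ y : F, v y = MvPolynomial.eval (fun i => e.repr y i) p) ∧
      (v ≠ 0 → 3 ^ (m - 2) ≤ (Finset.univ.filter fun x : F => v x ≠ 0).card) := by
  intro v hv
  have hvP : v ∘ e.equivFun.symm ∈ polyFunctions (Fin m) (ZMod 3) 4 := by
    refine (Submodule.span_le (p := (polyFunctions (Fin m) (ZMod 3) 4).comap
      (LinearMap.funLeft (ZMod 3) (ZMod 3) e.equivFun.symm))).2 ?_ hv
    rintro w ⟨c, ⟨a, b, h, rfl⟩, -, rfl⟩
    have hc := trace_quadratic_mem_polyFunctions e.equivFun.symm.toLinearMap a b h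
    rw [SetLike.mem_coe, Submodule.mem_comap]
    convert mul_mem_polyFunctions hc hc using 1
    ext x
    exact (zmod_three_ite_ne_zero _).trans (sq _)
  obtain ⟨p, hp, hpv⟩ := mem_polyFunctions.1 hvP
  refine ⟨⟨p, hp, fun y => by simpa using (hpv (e.equivFun y)).symm⟩, fun hv0 => ?_⟩
  have hw := grmDistance_le_hammingNorm hvP fun h0 => hv0 (funext fun y => by
    simpa using congrFun h0 (e.equivFun y))
  rw [grmDistance_four] at hw
  exact hw.trans_eq (hammingNorm_comp_equiv v e.equivFun.symm.toEquiv)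

/-- for odd `m ≥ 5`, the code spanned by the incidence vectors of the
supports of minimum-weight codewords of `C(m,3)` is a subcode of the 4th-order
generalized Reed-Muller code `R₃(4,m)` (every codeword is the evaluation of an
`m`-variate polynomial over `GF(3)` of total degree at most `4`, with respect to any
`GF(3)`-basis of `GF(3^m)`), and hence its minimum distance is at least `3^(m-2)`. -/
theorem code_subcode_of_GRM (m : ℕ) (hm : 5 ≤ m) (hmodd : Odd m)
    (F : Type) [Field F] [Fintype F] [DecidableEq F] [Algebra (ZMod 3) F]
    (hF : Fintype.card F = 3 ^ m)
    (e : Module.Basis (Fin m) (ZMod 3) F) :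
    ∀ v : F → ZMod 3,
      v ∈ Submodule.span (ZMod 3)
        {v : F → ZMod 3 | ∃ c : F → ZMod 3,
          (∃ a b : F, ∃ h : ZMod 3,
            c = fun x => Algebra.trace (ZMod 3) F (a * x ^ 2 + b * x) + h) ∧
          (Finset.univ.filter fun x : F => c x ≠ 0).card =
            2 * 3 ^ (m - 1) - 3 ^ ((m - 1) / 2) ∧
          v = fun x => if c x ≠ 0 then 1 else 0} →
      (∃ p : MvPolynomial (Fin m) (ZMod 3), p.totalDegree ≤ 4 ∧
        ∀ y : F, v y = MvPolynomial.eval (fun i => e.repr y i) p) ∧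
      (v ≠ 0 → 3 ^ (m - 2) ≤ (Finset.univ.filter fun x : F => v x ≠ 0).card) :=
  code_subcode_of_GRM_general m F e
end
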